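/- arXiv:2209.14718 — 4 statements merged into one kernel-verified Lean document; each statement's English description precedes it below -/
import Mathlib

section
/- Let H and A be Hopf quasigroups over a field F whose antipodes λ_H and λ_A are bijective, and let Ψ : H⊗A → A⊗H be a comonoidal distributive law of H over A. Then the linear map φ_H = (ε_A⊗H)∘Ψ : H⊗A → H makes H a right A-module comonoid. -/
open TensorProduct LinearMap

noncomputable section

universe u

/-- A Hopf quasigroup structure on an `F`-module `H`. -/
structure HopfQG (F : Type u) [Field F] (H : Type u) [AddCommGroup H] [Module F H] where
  eta : F →ₗ[F] H
  mu : H ⊗[F] H →ₗ[F] H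
  eps : H →ₗ[F] F
  delta : H →ₗ[F] H ⊗[F] H
  lam : H →ₗ[F] H
  mul_one : mu ∘ₗ lTensor H eta ∘ₗ (TensorProduct.rid F H).symm.toLinearMap = LinearMap.id
  one_mul : mu ∘ₗ rTensor H eta ∘ₗ (TensorProduct.lid F H).symm.toLinearMap = LinearMap.id
  counit_left : (TensorProduct.lid F H).toLinearMap ∘ₗ rTensor H eps ∘ₗ delta = LinearMap.id
  counit_right : (TensorProduct.rid F H).toLinearMap ∘ₗ lTensor H eps ∘ₗ delta = LinearMap.id
  coassoc : (TensorProduct.assoc F H H H).toLinearMap ∘ₗ rTensor H delta ∘ₗ delta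
      = lTensor H delta ∘ₗ delta
  eps_eta : eps ∘ₗ eta = LinearMap.id
  eps_mu : eps ∘ₗ mu = (TensorProduct.lid F F).toLinearMap ∘ₗ TensorProduct.map eps eps
  delta_eta : delta ∘ₗ eta
      = TensorProduct.map eta eta ∘ₗ (TensorProduct.lid F F).symm.toLinearMap
  delta_mu : delta ∘ₗ mu
      = TensorProduct.map mu mu ∘ₗ (TensorProduct.tensorTensorTensorComm F H H H H).toLinearMap
          ∘ₗ TensorProduct.map delta delta
  antipode_l1 : mu ∘ₗ TensorProduct.map lam mu ∘ₗ (TensorProduct.assoc F H H H).toLinearMap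
        ∘ₗ rTensor H delta
      = (TensorProduct.lid F H).toLinearMap ∘ₗ rTensor H eps
  antipode_l2 : mu ∘ₗ lTensor H mu ∘ₗ lTensor H (rTensor H lam)
        ∘ₗ (TensorProduct.assoc F H H H).toLinearMap ∘ₗ rTensor H delta
      = (TensorProduct.lid F H).toLinearMap ∘ₗ rTensor H eps
  antipode_r1 : mu ∘ₗ rTensor H mu ∘ₗ (TensorProduct.assoc F H H H).symm.toLinearMap
        ∘ₗ lTensor H (rTensor H lam) ∘ₗ lTensor H delta
      = (TensorProduct.rid F H).toLinearMap ∘ₗ lTensor H eps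
  antipode_r2 : mu ∘ₗ TensorProduct.map mu lam ∘ₗ (TensorProduct.assoc F H H H).symm.toLinearMap
        ∘ₗ lTensor H delta
      = (TensorProduct.rid F H).toLinearMap ∘ₗ lTensor H eps

section QGDefs

variable (F : Type u) [Field F]
variable {H : Type u} [AddCommGroup H] [Module F H]
variable {A : Type u} [AddCommGroup A] [Module F A]
variable {X : Type u} [AddCommGroup X] [Module F X]

/-- The tensor-product coproduct `δ_{H⊗A} = (H⊗c_{H,A}⊗A)∘(δ_H⊗δ_A)`. -/
def tensorDelta (dH : H →ₗ[F] H ⊗[F] H) (dA : A →ₗ[F] A ⊗[F] A) :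
    H ⊗[F] A →ₗ[F] (H ⊗[F] A) ⊗[F] (H ⊗[F] A) :=
  (TensorProduct.tensorTensorTensorComm F H H A A).toLinearMap ∘ₗ TensorProduct.map dH dA

/-- The tensor-product counit `ε_H⊗ε_A`. -/
def tensorEps (eH : H →ₗ[F] F) (eA : A →ₗ[F] F) : H ⊗[F] A →ₗ[F] F :=
  (TensorProduct.lid F F).toLinearMap ∘ₗ TensorProduct.map eH eA

/-- The tensor-product unit `η_H⊗η_A`. -/
def tensorEta (uH : F →ₗ[F] H) (uA : F →ₗ[F] A) : F →ₗ[F] H ⊗[F] A :=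
  TensorProduct.map uH uA ∘ₗ (TensorProduct.lid F F).symm.toLinearMap

/-- The tensor-product multiplication `(μ_H⊗μ_A)∘(H⊗c_{A,H}⊗A)`. -/
def tensorMu (mH : H ⊗[F] H →ₗ[F] H) (mA : A ⊗[F] A →ₗ[F] A) :
    (H ⊗[F] A) ⊗[F] (H ⊗[F] A) →ₗ[F] H ⊗[F] A :=
  TensorProduct.map mH mA ∘ₗ (TensorProduct.tensorTensorTensorComm F H A H A).toLinearMap

/-- `Ψ : H⊗A → A⊗H` is a distributive law of the Hopf quasigroup `H` over `A`. -/
def IsDistLaw (QH : HopfQG F H) (QA : HopfQG F A) (Ψ : H ⊗[F] A →ₗ[F] A ⊗[F] H) : Prop :=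
  (Ψ ∘ₗ lTensor H QA.mu ∘ₗ TensorProduct.map QH.lam (rTensor A QA.lam)
      = rTensor H QA.mu ∘ₗ (TensorProduct.assoc F A A H).symm.toLinearMap
        ∘ₗ lTensor A Ψ ∘ₗ (TensorProduct.assoc F A H A).toLinearMap
        ∘ₗ rTensor A Ψ ∘ₗ (TensorProduct.assoc F H A A).symm.toLinearMap
        ∘ₗ TensorProduct.map QH.lam (rTensor A QA.lam))
  ∧ (Ψ ∘ₗ rTensor A QH.mu ∘ₗ TensorProduct.map (lTensor H QH.lam) QA.lam
      = lTensor A QH.mu ∘ₗ (TensorProduct.assoc F A H H).toLinearMap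
        ∘ₗ rTensor H Ψ ∘ₗ (TensorProduct.assoc F H A H).symm.toLinearMap
        ∘ₗ lTensor H Ψ ∘ₗ (TensorProduct.assoc F H H A).toLinearMap
        ∘ₗ TensorProduct.map (lTensor H QH.lam) QA.lam)
  ∧ (Ψ ∘ₗ lTensor H QA.eta ∘ₗ (TensorProduct.rid F H).symm.toLinearMap
      = rTensor H QA.eta ∘ₗ (TensorProduct.lid F H).symm.toLinearMap)
  ∧ (Ψ ∘ₗ rTensor A QH.eta ∘ₗ (TensorProduct.lid F A).symm.toLinearMap
      = lTensor A QH.eta ∘ₗ (TensorProduct.rid F A).symm.toLinearMap)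

/-- `Ψ` is a comonoidal distributive law of `H` over `A`. -/
def IsComonoidalDL (QH : HopfQG F H) (QA : HopfQG F A) (Ψ : H ⊗[F] A →ₗ[F] A ⊗[F] H) : Prop :=
  IsDistLaw F QH QA Ψ
  ∧ (tensorDelta F QA.delta QH.delta ∘ₗ Ψ
      = TensorProduct.map Ψ Ψ ∘ₗ tensorDelta F QH.delta QA.delta)
  ∧ (tensorEps F QA.eps QH.eps ∘ₗ Ψ = tensorEps F QH.eps QA.eps)

/-- `Ψ` is an a-comonoidal distributive law of `H` over `A`. -/
def IsAComonoidalDL (QH : HopfQG F H) (QA : HopfQG F A) (Ψ : H ⊗[F] A →ₗ[F] A ⊗[F] H) : Prop :=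
  IsComonoidalDL F QH QA Ψ
  ∧ (lTensor A QH.mu ∘ₗ (TensorProduct.assoc F A H H).toLinearMap
        ∘ₗ TensorProduct.map Ψ QH.mu
        ∘ₗ (TensorProduct.assoc F H A (H ⊗[F] H)).symm.toLinearMap
        ∘ₗ lTensor H (TensorProduct.assoc F A H H).toLinearMap
        ∘ₗ lTensor H (rTensor H Ψ)
        ∘ₗ lTensor H (TensorProduct.assoc F H A H).symm.toLinearMap
        ∘ₗ (TensorProduct.assoc F H H (A ⊗[F] H)).toLinearMap
        ∘ₗ rTensor (A ⊗[F] H) (rTensor H QH.lam ∘ₗ QH.delta)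
      = (TensorProduct.lid F (A ⊗[F] H)).toLinearMap ∘ₗ rTensor (A ⊗[F] H) QH.eps)
  ∧ (lTensor A QH.mu ∘ₗ (TensorProduct.assoc F A H H).toLinearMap
        ∘ₗ TensorProduct.map Ψ QH.mu
        ∘ₗ (TensorProduct.assoc F H A (H ⊗[F] H)).symm.toLinearMap
        ∘ₗ lTensor H (TensorProduct.assoc F A H H).toLinearMap
        ∘ₗ lTensor H (rTensor H Ψ)
        ∘ₗ lTensor H (TensorProduct.assoc F H A H).symm.toLinearMap
        ∘ₗ (TensorProduct.assoc F H H (A ⊗[F] H)).toLinearMap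
        ∘ₗ rTensor (A ⊗[F] H) (lTensor H QH.lam ∘ₗ QH.delta)
      = (TensorProduct.lid F (A ⊗[F] H)).toLinearMap ∘ₗ rTensor (A ⊗[F] H) QH.eps)
  ∧ (rTensor H QA.mu ∘ₗ (TensorProduct.assoc F A A H).symm.toLinearMap
        ∘ₗ TensorProduct.map QA.mu Ψ
        ∘ₗ (TensorProduct.assoc F A A (H ⊗[F] A)).symm.toLinearMap
        ∘ₗ lTensor A (TensorProduct.assoc F A H A).toLinearMap
        ∘ₗ lTensor A (rTensor A Ψ)
        ∘ₗ lTensor A (TensorProduct.assoc F H A A).symm.toLinearMap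
        ∘ₗ (TensorProduct.assoc F A H (A ⊗[F] A)).toLinearMap
        ∘ₗ lTensor (A ⊗[F] H) (rTensor A QA.lam ∘ₗ QA.delta)
      = (TensorProduct.rid F (A ⊗[F] H)).toLinearMap ∘ₗ lTensor (A ⊗[F] H) QA.eps)
  ∧ (rTensor H QA.mu ∘ₗ (TensorProduct.assoc F A A H).symm.toLinearMap
        ∘ₗ TensorProduct.map QA.mu Ψ
        ∘ₗ (TensorProduct.assoc F A A (H ⊗[F] A)).symm.toLinearMap
        ∘ₗ lTensor A (TensorProduct.assoc F A H A).toLinearMap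
        ∘ₗ lTensor A (rTensor A Ψ)
        ∘ₗ lTensor A (TensorProduct.assoc F H A A).symm.toLinearMap
        ∘ₗ (TensorProduct.assoc F A H (A ⊗[F] A)).toLinearMap
        ∘ₗ lTensor (A ⊗[F] H) (lTensor A QA.lam ∘ₗ QA.delta)
      = (TensorProduct.rid F (A ⊗[F] H)).toLinearMap ∘ₗ lTensor (A ⊗[F] H) QA.eps)

/-- The wreath product multiplication `(μ_A⊗μ_H)∘(A⊗Ψ⊗H)` on `A⊗H`. -/
def wreathMul (QA : HopfQG F A) (QH : HopfQG F H) (Ψ : H ⊗[F] A →ₗ[F] A ⊗[F] H) :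
    (A ⊗[F] H) ⊗[F] (A ⊗[F] H) →ₗ[F] A ⊗[F] H :=
  TensorProduct.map QA.mu QH.mu ∘ₗ (TensorProduct.assoc F A A (H ⊗[F] H)).symm.toLinearMap
    ∘ₗ lTensor A ((TensorProduct.assoc F A H H).toLinearMap ∘ₗ rTensor H Ψ
        ∘ₗ (TensorProduct.assoc F H A H).symm.toLinearMap)
    ∘ₗ (TensorProduct.assoc F A H (A ⊗[F] H)).toLinearMap

/-- The wreath product antipode `Ψ∘(λ_H⊗λ_A)∘c_{A,H}`. -/
def wreathLam (QA : HopfQG F A) (QH : HopfQG F H) (Ψ : H ⊗[F] A →ₗ[F] A ⊗[F] H) :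
    A ⊗[F] H →ₗ[F] A ⊗[F] H :=
  Ψ ∘ₗ TensorProduct.map QH.lam QA.lam ∘ₗ (TensorProduct.comm F A H).toLinearMap

/-- `f` is a morphism of Hopf quasigroups. -/
def IsHopfQGMor (Q1 : HopfQG F H) (Q2 : HopfQG F X) (f : H →ₗ[F] X) : Prop :=
  f ∘ₗ Q1.eta = Q2.eta
  ∧ f ∘ₗ Q1.mu = Q2.mu ∘ₗ TensorProduct.map f f
  ∧ Q2.eps ∘ₗ f = Q1.eps
  ∧ TensorProduct.map f f ∘ₗ Q1.delta = Q2.delta ∘ₗ f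

/-- `ω_X = μ_X∘(i_A⊗i_H)`. -/
def omegaMap (QX : HopfQG F X) (iA : A →ₗ[F] X) (iH : H →ₗ[F] X) : A ⊗[F] H →ₗ[F] X :=
  QX.mu ∘ₗ TensorProduct.map iA iH

/-- `θ_X = μ_X∘(i_H⊗i_A)`. -/
def thetaMap (QX : HopfQG F X) (iH : H →ₗ[F] X) (iA : A →ₗ[F] X) : H ⊗[F] A →ₗ[F] X :=
  QX.mu ∘ₗ TensorProduct.map iH iA

/-- `X` factorizes as `X = AH`. -/
def Factorizes (QX : HopfQG F X) (QH : HopfQG F H) (QA : HopfQG F A)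
    (iH : H →ₗ[F] X) (iA : A →ₗ[F] X) : Prop :=
  Function.Bijective (omegaMap F QX iA iH)
  ∧ (QX.mu ∘ₗ rTensor X (omegaMap F QX iA iH)
      = QX.mu ∘ₗ TensorProduct.map iA (QX.mu ∘ₗ rTensor X iH)
          ∘ₗ (TensorProduct.assoc F A H X).toLinearMap)
  ∧ (QX.mu ∘ₗ lTensor X (omegaMap F QX iA iH)
      = QX.mu ∘ₗ TensorProduct.map (QX.mu ∘ₗ lTensor X iA) iH
          ∘ₗ (TensorProduct.assoc F X A H).symm.toLinearMap)
  ∧ (QX.mu ∘ₗ rTensor X (thetaMap F QX iH iA ∘ₗ TensorProduct.map QH.lam QA.lam)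
      = QX.mu ∘ₗ TensorProduct.map (iH ∘ₗ QH.lam) (QX.mu ∘ₗ rTensor X (iA ∘ₗ QA.lam))
          ∘ₗ (TensorProduct.assoc F H A X).toLinearMap)
  ∧ (QX.mu ∘ₗ lTensor X (thetaMap F QX iH iA ∘ₗ TensorProduct.map QH.lam QA.lam)
      = QX.mu ∘ₗ TensorProduct.map (QX.mu ∘ₗ lTensor X (iH ∘ₗ QH.lam)) (iA ∘ₗ QA.lam)
          ∘ₗ (TensorProduct.assoc F X H A).symm.toLinearMap)

end QGDefs

section MPDefs

variable (F : Type u) [Field F]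
variable {H : Type u} [AddCommGroup H] [Module F H]
variable {A : Type u} [AddCommGroup A] [Module F A]

/-- `(A,φA)` is a left `H`-module comonoid. -/
def IsLeftModuleComonoid (QH : HopfQG F H) (QA : HopfQG F A) (φA : H ⊗[F] A →ₗ[F] A) : Prop :=
  (φA ∘ₗ rTensor A QH.eta ∘ₗ (TensorProduct.lid F A).symm.toLinearMap = LinearMap.id)
  ∧ (φA ∘ₗ lTensor H φA ∘ₗ (TensorProduct.assoc F H H A).toLinearMap = φA ∘ₗ rTensor A QH.mu)
  ∧ (QA.eps ∘ₗ φA = tensorEps F QH.eps QA.eps)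
  ∧ (QA.delta ∘ₗ φA
      = TensorProduct.map φA φA ∘ₗ (TensorProduct.tensorTensorTensorComm F H H A A).toLinearMap
          ∘ₗ TensorProduct.map QH.delta QA.delta)

/-- `(H,φH)` is a right `A`-module comonoid. -/
def IsRightModuleComonoid (QH : HopfQG F H) (QA : HopfQG F A) (φH : H ⊗[F] A →ₗ[F] H) : Prop :=
  (φH ∘ₗ lTensor H QA.eta ∘ₗ (TensorProduct.rid F H).symm.toLinearMap = LinearMap.id)
  ∧ (φH ∘ₗ rTensor A φH ∘ₗ (TensorProduct.assoc F H A A).symm.toLinearMap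
      = φH ∘ₗ lTensor H QA.mu)
  ∧ (QH.eps ∘ₗ φH = tensorEps F QH.eps QA.eps)
  ∧ (QH.delta ∘ₗ φH
      = TensorProduct.map φH φH ∘ₗ (TensorProduct.tensorTensorTensorComm F H H A A).toLinearMap
          ∘ₗ TensorProduct.map QH.delta QA.delta)

/-- The map `Ψ = (φ_A⊗φ_H)∘(H⊗c_{H,A}⊗A)∘(δ_H⊗δ_A)` associated to a pair of actions. -/
def mpPsi (QA : HopfQG F A) (QH : HopfQG F H)
    (φA : H ⊗[F] A →ₗ[F] A) (φH : H ⊗[F] A →ₗ[F] H) : H ⊗[F] A →ₗ[F] A ⊗[F] H :=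
  TensorProduct.map φA φH ∘ₗ (TensorProduct.tensorTensorTensorComm F H H A A).toLinearMap
    ∘ₗ TensorProduct.map QH.delta QA.delta

/-- `(A,H)` is a matched pair of Hopf quasigroups with actions `φA`, `φH`. -/
def IsMatchedPair (QA : HopfQG F A) (QH : HopfQG F H)
    (φA : H ⊗[F] A →ₗ[F] A) (φH : H ⊗[F] A →ₗ[F] H) : Prop :=
  IsLeftModuleComonoid F QH QA φA
  ∧ IsRightModuleComonoid F QH QA φH
  -- (d1) φ_A∘(H⊗η_A) = ε_H⊗η_A
  ∧ (φA ∘ₗ lTensor H QA.eta ∘ₗ (TensorProduct.rid F H).symm.toLinearMap = QA.eta ∘ₗ QH.eps)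
  -- (d2) φ_H∘(η_H⊗A) = η_H⊗ε_A
  ∧ (φH ∘ₗ rTensor A QH.eta ∘ₗ (TensorProduct.lid F A).symm.toLinearMap = QH.eta ∘ₗ QA.eps)
  -- (d3) (φ_H⊗φ_A)∘δ_{H⊗A} = c_{A,H}∘Ψ
  ∧ (TensorProduct.map φH φA ∘ₗ (TensorProduct.tensorTensorTensorComm F H H A A).toLinearMap
        ∘ₗ TensorProduct.map QH.delta QA.delta
      = (TensorProduct.comm F A H).toLinearMap ∘ₗ mpPsi F QA QH φA φH)
  -- (d4)
  ∧ (φA ∘ₗ lTensor H QA.mu ∘ₗ TensorProduct.map QH.lam (rTensor A QA.lam)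
      = QA.mu ∘ₗ lTensor A φA ∘ₗ (TensorProduct.assoc F A H A).toLinearMap
          ∘ₗ rTensor A (mpPsi F QA QH φA φH ∘ₗ TensorProduct.map QH.lam QA.lam)
          ∘ₗ (TensorProduct.assoc F H A A).symm.toLinearMap)
  -- (d5)
  ∧ (QH.mu ∘ₗ TensorProduct.map φH QH.mu
        ∘ₗ (TensorProduct.assoc F H A (H ⊗[F] H)).symm.toLinearMap
        ∘ₗ lTensor H (TensorProduct.assoc F A H H).toLinearMap
        ∘ₗ TensorProduct.map QH.lam (rTensor H (mpPsi F QA QH φA φH))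
        ∘ₗ lTensor H (TensorProduct.assoc F H A H).symm.toLinearMap
        ∘ₗ (TensorProduct.assoc F H H (A ⊗[F] H)).toLinearMap
        ∘ₗ rTensor (A ⊗[F] H) QH.delta
      = (TensorProduct.lid F H).toLinearMap
          ∘ₗ rTensor H (tensorEps F QH.eps QA.eps)
          ∘ₗ (TensorProduct.assoc F H A H).symm.toLinearMap)
  -- (d6)
  ∧ (QH.mu ∘ₗ TensorProduct.map φH QH.mu
        ∘ₗ (TensorProduct.assoc F H A (H ⊗[F] H)).symm.toLinearMap
        ∘ₗ lTensor H (TensorProduct.assoc F A H H).toLinearMap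
        ∘ₗ lTensor H (rTensor H (mpPsi F QA QH φA φH))
        ∘ₗ lTensor H (TensorProduct.assoc F H A H).symm.toLinearMap
        ∘ₗ (TensorProduct.assoc F H H (A ⊗[F] H)).toLinearMap
        ∘ₗ rTensor (A ⊗[F] H) (lTensor H QH.lam ∘ₗ QH.delta)
      = (TensorProduct.lid F H).toLinearMap
          ∘ₗ rTensor H (tensorEps F QH.eps QA.eps)
          ∘ₗ (TensorProduct.assoc F H A H).symm.toLinearMap)
  -- (d7)
  ∧ (φH ∘ₗ rTensor A QH.mu ∘ₗ TensorProduct.map (lTensor H QH.lam) QA.lam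
      = QH.mu ∘ₗ rTensor H φH ∘ₗ (TensorProduct.assoc F H A H).symm.toLinearMap
          ∘ₗ lTensor H (mpPsi F QA QH φA φH ∘ₗ TensorProduct.map QH.lam QA.lam)
          ∘ₗ (TensorProduct.assoc F H H A).toLinearMap)
  -- (d8)
  ∧ (QA.mu ∘ₗ TensorProduct.map QA.mu φA
        ∘ₗ (TensorProduct.assoc F A A (H ⊗[F] A)).symm.toLinearMap
        ∘ₗ lTensor A (TensorProduct.assoc F A H A).toLinearMap
        ∘ₗ lTensor A (TensorProduct.map (mpPsi F QA QH φA φH) QA.lam)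
        ∘ₗ lTensor A (TensorProduct.assoc F H A A).symm.toLinearMap
        ∘ₗ (TensorProduct.assoc F A H (A ⊗[F] A)).toLinearMap
        ∘ₗ lTensor (A ⊗[F] H) QA.delta
      = (TensorProduct.rid F A).toLinearMap
          ∘ₗ lTensor A (tensorEps F QH.eps QA.eps)
          ∘ₗ (TensorProduct.assoc F A H A).toLinearMap)
  -- (d9)
  ∧ (QA.mu ∘ₗ TensorProduct.map QA.mu φA
        ∘ₗ (TensorProduct.assoc F A A (H ⊗[F] A)).symm.toLinearMap
        ∘ₗ lTensor A (TensorProduct.assoc F A H A).toLinearMap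
        ∘ₗ lTensor A (rTensor A (mpPsi F QA QH φA φH))
        ∘ₗ lTensor A (TensorProduct.assoc F H A A).symm.toLinearMap
        ∘ₗ (TensorProduct.assoc F A H (A ⊗[F] A)).toLinearMap
        ∘ₗ lTensor (A ⊗[F] H) (rTensor A QA.lam ∘ₗ QA.delta)
      = (TensorProduct.rid F A).toLinearMap
          ∘ₗ lTensor A (tensorEps F QH.eps QA.eps)
          ∘ₗ (TensorProduct.assoc F A H A).toLinearMap)

end MPDefs

/-- for a comonoidal distributive law `Ψ` of `H` over `A` (with bijective
antipodes), `φ_H = (ε_A⊗H)∘Ψ` makes `H` a right `A`-module comonoid. -/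
theorem stmt5_phiH_right_module_comonoid
    {F : Type u} [Field F] {H A : Type u}
    [AddCommGroup H] [Module F H] [AddCommGroup A] [Module F A]
    (QH : HopfQG F H) (QA : HopfQG F A)
    (hlamH : Function.Bijective QH.lam) (hlamA : Function.Bijective QA.lam)
    (Ψ : H ⊗[F] A →ₗ[F] A ⊗[F] H) (hΨ : IsComonoidalDL F QH QA Ψ) :
    IsRightModuleComonoid F QH QA
      ((TensorProduct.lid F H).toLinearMap ∘ₗ rTensor H QA.eps ∘ₗ Ψ) := by
  obtain ⟨⟨hd1, hd2, hd3, hd4⟩, hcom, hcou⟩ := hΨ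
  set π : A ⊗[F] H →ₗ[F] H :=
    (TensorProduct.lid F H).toLinearMap ∘ₗ rTensor H QA.eps with hπdef
  have hπ : ∀ (a : A) (h : H), π (a ⊗ₜ[F] h) = QA.eps a • h := by
    intro a h; simp [hπdef]
  have heps_eta : QA.eps (QA.eta 1) = 1 := by
    simpa using LinearMap.congr_fun QA.eps_eta (1 : F)
  have heps_mu : ∀ x y : A, QA.eps (QA.mu (x ⊗ₜ[F] y)) = QA.eps x * QA.eps y := by
    intro x y; simpa using LinearMap.congr_fun QA.eps_mu (x ⊗ₜ[F] y)
  have hsurj : Function.Surjective (TensorProduct.map QH.lam (rTensor A QA.lam)) :=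
    TensorProduct.map_surjective hlamH.2 (LinearMap.rTensor_surjective A hlamA.2)
  have E : Ψ ∘ₗ lTensor H QA.mu
      = rTensor H QA.mu ∘ₗ (TensorProduct.assoc F A A H).symm.toLinearMap
        ∘ₗ lTensor A Ψ ∘ₗ (TensorProduct.assoc F A H A).toLinearMap
        ∘ₗ rTensor A Ψ ∘ₗ (TensorProduct.assoc F H A A).symm.toLinearMap := by
    rw [← LinearMap.cancel_right hsurj]
    exact hd1
  refine ⟨?_, ?_, ?_, ?_⟩
  · -- unit
    apply LinearMap.ext; intro h
    have h3 := LinearMap.congr_fun hd3 h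
    simp only [LinearMap.comp_apply, LinearEquiv.coe_coe, TensorProduct.rid_symm_apply,
      TensorProduct.lid_symm_apply, lTensor_tmul, rTensor_tmul, LinearMap.id_apply] at h3 ⊢
    rw [h3]
    simp [heps_eta]
  · -- associativity of the action
    apply TensorProduct.ext'
    intro h x
    induction x using TensorProduct.induction_on with
    | zero => simp
    | add x y ihx ihy =>
        simp only [TensorProduct.tmul_add, map_add] at ihx ihy ⊢
        rw [ihx, ihy]
    | tmul a a' =>
        have e2 := LinearMap.congr_fun E (h ⊗ₜ[F] (a ⊗ₜ[F] a'))
        simp only [LinearMap.comp_apply, LinearEquiv.coe_coe, lTensor_tmul, rTensor_tmul,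
          TensorProduct.assoc_tmul, TensorProduct.assoc_symm_tmul] at e2 ⊢
        rw [e2]
        generalize Ψ (h ⊗ₜ[F] a) = x
        induction x using TensorProduct.induction_on with
        | zero => simp
        | add x y ihx ihy =>
            simp only [map_add, TensorProduct.add_tmul] at ihx ihy ⊢
            rw [ihx, ihy]
        | tmul a₁ h₁ =>
            simp only [rTensor_tmul, TensorProduct.lid_tmul, TensorProduct.assoc_tmul,
              lTensor_tmul]
            rw [← TensorProduct.smul_tmul']
            simp only [map_smul]
            generalize Ψ (h₁ ⊗ₜ[F] a') = y
            induction y using TensorProduct.induction_on with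
            | zero => simp
            | add u v ihu ihv =>
                simp only [map_add, TensorProduct.tmul_add, smul_add] at ihu ihv ⊢
                rw [ihu, ihv]
            | tmul a₂ h₂ =>
                simp only [TensorProduct.assoc_symm_tmul, rTensor_tmul,
                  TensorProduct.lid_tmul, heps_mu, mul_smul]
  · -- counit
    apply TensorProduct.ext'
    intro h a
    have hc := LinearMap.congr_fun hcou (h ⊗ₜ[F] a)
    have key : ∀ x : A ⊗[F] H,
        QH.eps ((TensorProduct.lid F H) (rTensor H QA.eps x))
          = (TensorProduct.lid F F) (TensorProduct.map QA.eps QH.eps x) := by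
      intro x
      induction x using TensorProduct.induction_on with
      | zero => simp
      | add u v ihu ihv => simp only [map_add, ihu, ihv]
      | tmul a h => simp [smul_eq_mul, mul_comm]
    simp only [tensorEps, LinearMap.comp_apply, LinearEquiv.coe_coe] at hc ⊢
    rw [key]
    exact hc
  · -- comultiplicativity
    have heps2 : ∀ a : A,
        (TensorProduct.lid F F) (TensorProduct.map QA.eps QA.eps (QA.delta a)) = QA.eps a := by
      intro a
      have key : ∀ x : A ⊗[F] A,
          (TensorProduct.lid F F) (TensorProduct.map QA.eps QA.eps x)
            = QA.eps ((TensorProduct.lid F A) (rTensor A QA.eps x)) := by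
        intro x
        induction x using TensorProduct.induction_on with
        | zero => simp
        | add u v ihu ihv => simp only [map_add, ihu, ihv]
        | tmul x y => simp [smul_eq_mul, mul_comm]
      have h1 := LinearMap.congr_fun QA.counit_left a
      simp only [LinearMap.comp_apply, LinearEquiv.coe_coe, LinearMap.id_apply] at h1
      rw [key, h1]
    have L : ∀ (u : A ⊗[F] A) (v : H ⊗[F] H),
        TensorProduct.map π π ((TensorProduct.tensorTensorTensorComm F A A H H) (u ⊗ₜ[F] v))
          = (TensorProduct.lid F F) (TensorProduct.map QA.eps QA.eps u) • v := by
      intro u v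
      induction u using TensorProduct.induction_on with
      | zero => simp
      | add u₁ u₂ ih1 ih2 => simp only [TensorProduct.add_tmul, map_add, ih1, ih2, add_smul]
      | tmul a a' =>
          induction v using TensorProduct.induction_on with
          | zero => simp
          | add v₁ v₂ ih1 ih2 =>
              simp only [TensorProduct.tmul_add, map_add, ih1, ih2, smul_add]
          | tmul h h' =>
              simp only [TensorProduct.tensorTensorTensorComm_tmul, TensorProduct.map_tmul,
                hπ, TensorProduct.lid_tmul, smul_eq_mul]
              rw [← TensorProduct.smul_tmul', TensorProduct.tmul_smul, smul_smul]
    have pi_delta : QH.delta ∘ₗ π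
        = TensorProduct.map π π
          ∘ₗ (TensorProduct.tensorTensorTensorComm F A A H H).toLinearMap
          ∘ₗ TensorProduct.map QA.delta QH.delta := by
      apply TensorProduct.ext'
      intro a h
      simp only [LinearMap.comp_apply, LinearEquiv.coe_coe, TensorProduct.map_tmul]
      rw [hπ, map_smul, L, heps2]
    have final : QH.delta ∘ₗ (π ∘ₗ Ψ)
        = TensorProduct.map (π ∘ₗ Ψ) (π ∘ₗ Ψ)
          ∘ₗ (TensorProduct.tensorTensorTensorComm F H H A A).toLinearMap
          ∘ₗ TensorProduct.map QH.delta QA.delta := by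
      calc QH.delta ∘ₗ (π ∘ₗ Ψ) = (QH.delta ∘ₗ π) ∘ₗ Ψ := rfl
        _ = TensorProduct.map π π ∘ₗ (tensorDelta F QA.delta QH.delta ∘ₗ Ψ) := by
            rw [pi_delta]; rfl
        _ = TensorProduct.map π π
              ∘ₗ (TensorProduct.map Ψ Ψ ∘ₗ tensorDelta F QH.delta QA.delta) := by rw [hcom]
        _ = (TensorProduct.map π π ∘ₗ TensorProduct.map Ψ Ψ)
              ∘ₗ tensorDelta F QH.delta QA.delta := rfl
        _ = _ := by rw [← TensorProduct.map_comp]; rfl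
    exact final
end
end

section
/- Let Y be a Hopf coquasigroup over a field F and let D, B be Hopf coquasigroups equipped with surjective Hopf coquasigroup morphisms p_D : Y → D and p_B : Y → B such that Y cofactorizes as Y = D•B. Then the linear map Ω = v_Y∘u_Y⁻¹ : D⊗B → B⊗D is a monoidal codistributive law of D over B. -/
open TensorProduct LinearMap

noncomputable section

universe u

/-- A Hopf coquasigroup structure on an `F`-module `D`. -/
structure HopfCoQG (F : Type u) [Field F] (D : Type u) [AddCommGroup D] [Module F D] where
  eta : F →ₗ[F] D
  mu : D ⊗[F] D →ₗ[F] D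
  eps : D →ₗ[F] F
  delta : D →ₗ[F] D ⊗[F] D
  lam : D →ₗ[F] D
  mul_one : mu ∘ₗ lTensor D eta ∘ₗ (TensorProduct.rid F D).symm.toLinearMap = LinearMap.id
  one_mul : mu ∘ₗ rTensor D eta ∘ₗ (TensorProduct.lid F D).symm.toLinearMap = LinearMap.id
  mul_assoc : mu ∘ₗ rTensor D mu
      = mu ∘ₗ lTensor D mu ∘ₗ (TensorProduct.assoc F D D D).toLinearMap
  counit_left : (TensorProduct.lid F D).toLinearMap ∘ₗ rTensor D eps ∘ₗ delta = LinearMap.id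
  counit_right : (TensorProduct.rid F D).toLinearMap ∘ₗ lTensor D eps ∘ₗ delta = LinearMap.id
  eps_eta : eps ∘ₗ eta = LinearMap.id
  eps_mu : eps ∘ₗ mu = (TensorProduct.lid F F).toLinearMap ∘ₗ TensorProduct.map eps eps
  delta_eta : delta ∘ₗ eta
      = TensorProduct.map eta eta ∘ₗ (TensorProduct.lid F F).symm.toLinearMap
  delta_mu : delta ∘ₗ mu
      = TensorProduct.map mu mu ∘ₗ (TensorProduct.tensorTensorTensorComm F D D D D).toLinearMap
          ∘ₗ TensorProduct.map delta delta
  antipode_l1 : lTensor D mu ∘ₗ (TensorProduct.assoc F D D D).toLinearMap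
        ∘ₗ TensorProduct.map delta lam ∘ₗ delta
      = lTensor D eta ∘ₗ (TensorProduct.rid F D).symm.toLinearMap
  antipode_l2 : lTensor D mu ∘ₗ lTensor D (rTensor D lam)
        ∘ₗ (TensorProduct.assoc F D D D).toLinearMap ∘ₗ rTensor D delta ∘ₗ delta
      = lTensor D eta ∘ₗ (TensorProduct.rid F D).symm.toLinearMap
  antipode_r1 : rTensor D mu ∘ₗ (TensorProduct.assoc F D D D).symm.toLinearMap
        ∘ₗ TensorProduct.map lam delta ∘ₗ delta
      = rTensor D eta ∘ₗ (TensorProduct.lid F D).symm.toLinearMap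
  antipode_r2 : rTensor D mu ∘ₗ (TensorProduct.assoc F D D D).symm.toLinearMap
        ∘ₗ lTensor D (rTensor D lam) ∘ₗ lTensor D delta ∘ₗ delta
      = rTensor D eta ∘ₗ (TensorProduct.lid F D).symm.toLinearMap

section CoQGDefs

variable (F : Type u) [Field F]
variable {D : Type u} [AddCommGroup D] [Module F D]
variable {B : Type u} [AddCommGroup B] [Module F B]
variable {Y : Type u} [AddCommGroup Y] [Module F Y]

/-- `Ω : D⊗B → B⊗D` is a codistributive law of the Hopf coquasigroup `D` over `B`. -/
def IsCoDistLaw (QD : HopfCoQG F D) (QB : HopfCoQG F B) (Ω : D ⊗[F] B →ₗ[F] B ⊗[F] D) : Prop :=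
  (lTensor B (TensorProduct.map QB.lam QD.lam) ∘ₗ (TensorProduct.assoc F B B D).toLinearMap
      ∘ₗ rTensor D QB.delta ∘ₗ Ω
    = lTensor B (TensorProduct.map QB.lam QD.lam) ∘ₗ lTensor B Ω
        ∘ₗ (TensorProduct.assoc F B D B).toLinearMap ∘ₗ rTensor B Ω
        ∘ₗ (TensorProduct.assoc F D B B).symm.toLinearMap ∘ₗ lTensor D QB.delta)
  ∧ (rTensor D (TensorProduct.map QB.lam QD.lam) ∘ₗ (TensorProduct.assoc F B D D).symm.toLinearMap
      ∘ₗ lTensor B QD.delta ∘ₗ Ω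
    = rTensor D (TensorProduct.map QB.lam QD.lam) ∘ₗ rTensor D Ω
        ∘ₗ (TensorProduct.assoc F D B D).symm.toLinearMap ∘ₗ lTensor D Ω
        ∘ₗ (TensorProduct.assoc F D D B).toLinearMap ∘ₗ rTensor B QD.delta)
  ∧ ((TensorProduct.lid F D).toLinearMap ∘ₗ rTensor D QB.eps ∘ₗ Ω
      = (TensorProduct.rid F D).toLinearMap ∘ₗ lTensor D QB.eps)
  ∧ ((TensorProduct.rid F B).toLinearMap ∘ₗ lTensor B QD.eps ∘ₗ Ω
      = (TensorProduct.lid F B).toLinearMap ∘ₗ rTensor B QD.eps)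

/-- `Ω` is a monoidal codistributive law of `D` over `B`. -/
def IsMonoidalCoDL (QD : HopfCoQG F D) (QB : HopfCoQG F B) (Ω : D ⊗[F] B →ₗ[F] B ⊗[F] D) :
    Prop :=
  IsCoDistLaw F QD QB Ω
  ∧ (Ω ∘ₗ tensorMu F QD.mu QB.mu = tensorMu F QB.mu QD.mu ∘ₗ TensorProduct.map Ω Ω)
  ∧ (Ω ∘ₗ tensorEta F QD.eta QB.eta = tensorEta F QB.eta QD.eta)

/-- `Ω` is an a-monoidal codistributive law of `D` over `B`. -/
def IsAMonoidalCoDL (QD : HopfCoQG F D) (QB : HopfCoQG F B) (Ω : D ⊗[F] B →ₗ[F] B ⊗[F] D) :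
    Prop :=
  IsMonoidalCoDL F QD QB Ω
  ∧ (lTensor D (lTensor B (QD.mu ∘ₗ lTensor D QD.lam))
        ∘ₗ lTensor D (TensorProduct.assoc F B D D).toLinearMap
        ∘ₗ lTensor D (rTensor D Ω)
        ∘ₗ lTensor D (TensorProduct.assoc F D B D).symm.toLinearMap
        ∘ₗ (TensorProduct.assoc F D D (B ⊗[F] D)).toLinearMap
        ∘ₗ TensorProduct.map QD.delta Ω
        ∘ₗ (TensorProduct.assoc F D D B).toLinearMap
        ∘ₗ rTensor B QD.delta
      = lTensor D (lTensor B QD.eta ∘ₗ (TensorProduct.rid F B).symm.toLinearMap))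
  ∧ (lTensor D (lTensor B (QD.mu ∘ₗ rTensor D QD.lam))
        ∘ₗ lTensor D (TensorProduct.assoc F B D D).toLinearMap
        ∘ₗ lTensor D (rTensor D Ω)
        ∘ₗ lTensor D (TensorProduct.assoc F D B D).symm.toLinearMap
        ∘ₗ (TensorProduct.assoc F D D (B ⊗[F] D)).toLinearMap
        ∘ₗ TensorProduct.map QD.delta Ω
        ∘ₗ (TensorProduct.assoc F D D B).toLinearMap
        ∘ₗ rTensor B QD.delta
      = lTensor D (lTensor B QD.eta ∘ₗ (TensorProduct.rid F B).symm.toLinearMap))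
  ∧ (rTensor (D ⊗[F] B) (QB.mu ∘ₗ lTensor B QB.lam)
        ∘ₗ (TensorProduct.assoc F B B (D ⊗[F] B)).symm.toLinearMap
        ∘ₗ lTensor B (TensorProduct.assoc F B D B).toLinearMap
        ∘ₗ lTensor B (rTensor B Ω)
        ∘ₗ lTensor B (TensorProduct.assoc F D B B).symm.toLinearMap
        ∘ₗ (TensorProduct.assoc F B D (B ⊗[F] B)).toLinearMap
        ∘ₗ TensorProduct.map Ω QB.delta
        ∘ₗ (TensorProduct.assoc F D B B).symm.toLinearMap
        ∘ₗ lTensor D QB.delta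
      = rTensor (D ⊗[F] B) QB.eta ∘ₗ (TensorProduct.lid F (D ⊗[F] B)).symm.toLinearMap)
  ∧ (rTensor (D ⊗[F] B) (QB.mu ∘ₗ rTensor B QB.lam)
        ∘ₗ (TensorProduct.assoc F B B (D ⊗[F] B)).symm.toLinearMap
        ∘ₗ lTensor B (TensorProduct.assoc F B D B).toLinearMap
        ∘ₗ lTensor B (rTensor B Ω)
        ∘ₗ lTensor B (TensorProduct.assoc F D B B).symm.toLinearMap
        ∘ₗ (TensorProduct.assoc F B D (B ⊗[F] B)).toLinearMap
        ∘ₗ TensorProduct.map Ω QB.delta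
        ∘ₗ (TensorProduct.assoc F D B B).symm.toLinearMap
        ∘ₗ lTensor D QB.delta
      = rTensor (D ⊗[F] B) QB.eta ∘ₗ (TensorProduct.lid F (D ⊗[F] B)).symm.toLinearMap)

/-- The wreath coproduct `(D⊗Ω⊗B)∘(δ_D⊗δ_B)` on `D⊗B`. -/
def wreathDelta (QD : HopfCoQG F D) (QB : HopfCoQG F B) (Ω : D ⊗[F] B →ₗ[F] B ⊗[F] D) :
    D ⊗[F] B →ₗ[F] (D ⊗[F] B) ⊗[F] (D ⊗[F] B) :=
  (TensorProduct.assoc F D B (D ⊗[F] B)).symm.toLinearMap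
    ∘ₗ lTensor D ((TensorProduct.assoc F B D B).toLinearMap ∘ₗ rTensor B Ω
        ∘ₗ (TensorProduct.assoc F D B B).symm.toLinearMap)
    ∘ₗ (TensorProduct.assoc F D D (B ⊗[F] B)).toLinearMap
    ∘ₗ TensorProduct.map QD.delta QB.delta

/-- The wreath coproduct antipode `c_{B,D}∘(λ_B⊗λ_D)∘Ω`. -/
def wreathCoLam (QD : HopfCoQG F D) (QB : HopfCoQG F B) (Ω : D ⊗[F] B →ₗ[F] B ⊗[F] D) :
    D ⊗[F] B →ₗ[F] D ⊗[F] B :=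
  (TensorProduct.comm F B D).toLinearMap ∘ₗ TensorProduct.map QB.lam QD.lam ∘ₗ Ω

/-- `f` is a morphism of Hopf coquasigroups. -/
def IsHopfCoQGMor (Q1 : HopfCoQG F D) (Q2 : HopfCoQG F B) (f : D →ₗ[F] B) : Prop :=
  f ∘ₗ Q1.eta = Q2.eta
  ∧ f ∘ₗ Q1.mu = Q2.mu ∘ₗ TensorProduct.map f f
  ∧ Q2.eps ∘ₗ f = Q1.eps
  ∧ TensorProduct.map f f ∘ₗ Q1.delta = Q2.delta ∘ₗ f

/-- `u_Y = (p_D⊗p_B)∘δ_Y`. -/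
def uMap (QY : HopfCoQG F Y) (pD : Y →ₗ[F] D) (pB : Y →ₗ[F] B) : Y →ₗ[F] D ⊗[F] B :=
  TensorProduct.map pD pB ∘ₗ QY.delta

/-- `v_Y = (p_B⊗p_D)∘δ_Y`. -/
def vMap (QY : HopfCoQG F Y) (pB : Y →ₗ[F] B) (pD : Y →ₗ[F] D) : Y →ₗ[F] B ⊗[F] D :=
  TensorProduct.map pB pD ∘ₗ QY.delta

/-- `Y` cofactorizes as `Y = D•B`. -/
def Cofactorizes (QY : HopfCoQG F Y) (QD : HopfCoQG F D) (QB : HopfCoQG F B)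
    (pD : Y →ₗ[F] D) (pB : Y →ₗ[F] B) : Prop :=
  Function.Bijective (uMap F QY pD pB)
  ∧ (lTensor Y (uMap F QY pD pB) ∘ₗ QY.delta
      = (TensorProduct.assoc F Y D B).toLinearMap
          ∘ₗ TensorProduct.map (lTensor Y pD ∘ₗ QY.delta) pB ∘ₗ QY.delta)
  ∧ (rTensor Y (uMap F QY pD pB) ∘ₗ QY.delta
      = (TensorProduct.assoc F D B Y).symm.toLinearMap
          ∘ₗ TensorProduct.map pD (rTensor Y pB ∘ₗ QY.delta) ∘ₗ QY.delta)
  ∧ (lTensor Y (TensorProduct.map QB.lam QD.lam ∘ₗ vMap F QY pB pD) ∘ₗ QY.delta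
      = (TensorProduct.assoc F Y B D).toLinearMap
          ∘ₗ TensorProduct.map (lTensor Y (QB.lam ∘ₗ pB) ∘ₗ QY.delta) (QD.lam ∘ₗ pD)
          ∘ₗ QY.delta)
  ∧ (rTensor Y (TensorProduct.map QB.lam QD.lam ∘ₗ vMap F QY pB pD) ∘ₗ QY.delta
      = (TensorProduct.assoc F B D Y).symm.toLinearMap
          ∘ₗ TensorProduct.map (QB.lam ∘ₗ pB) (rTensor Y (QD.lam ∘ₗ pD) ∘ₗ QY.delta)
          ∘ₗ QY.delta)

end CoQGDefs


/-! Write `⟨f, g⟩ = (f ⊗ g) ∘ δ_Y`, so that `u_Y = ⟨p_D, p_B⟩`, `v_Y = ⟨p_B, p_D⟩` and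
`Ω ∘ u_Y = v_Y`. As `u_Y` is onto, every identity for `Ω` may be checked after precomposing
with `u_Y`. The cofactorization conditions, stated with `id_Y` on the free leg, hold with any map
on that leg; together with `p_D`, `p_B` being coalgebra maps they bring both sides of the first
codistributivity identity to `⟨p_B, ⟨λ_B p_B, λ_D p_D⟩⟩` and of the second to
`⟨⟨λ_B p_B, λ_D p_D⟩, p_D⟩`. Monoidality holds because `u_Y` and `v_Y` are algebra maps. -/

theorem comp_ofBijective_symm_comp {R M N P : Type*} [Semiring R] [AddCommMonoid M] [Module R M]
    [AddCommMonoid N] [Module R N] [AddCommMonoid P] [Module R P] (v : M →ₗ[R] P)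
    {u : M →ₗ[R] N} (hu : Function.Bijective u) :
    (v ∘ₗ (LinearEquiv.ofBijective u hu).symm.toLinearMap) ∘ₗ u = v := by
  ext; simp

section TensorPair

variable {R : Type*} [CommSemiring R] {Y M N P Q S : Type*}
  [AddCommMonoid Y] [Module R Y] [AddCommMonoid M] [Module R M] [AddCommMonoid N] [Module R N]
  [AddCommMonoid P] [Module R P] [AddCommMonoid Q] [Module R Q] [AddCommMonoid S] [Module R S]

/-- In Sweedler notation, `tensorPair δ f g y = f y₍₁₎ ⊗ g y₍₂₎`. -/
def tensorPair (δ : Y →ₗ[R] Y ⊗[R] Y) (f : Y →ₗ[R] M) (g : Y →ₗ[R] N) : Y →ₗ[R] M ⊗[R] N :=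
  TensorProduct.map f g ∘ₗ δ

variable (δ : Y →ₗ[R] Y ⊗[R] Y)

theorem map_comp_tensorPair (a : M →ₗ[R] P) (b : N →ₗ[R] Q) (f : Y →ₗ[R] M) (g : Y →ₗ[R] N) :
    TensorProduct.map a b ∘ₗ tensorPair δ f g = tensorPair δ (a ∘ₗ f) (b ∘ₗ g) := by
  rw [tensorPair, tensorPair, TensorProduct.map_comp, comp_assoc]

theorem lTensor_comp_tensorPair (b : N →ₗ[R] Q) (f : Y →ₗ[R] M) (g : Y →ₗ[R] N) :
    lTensor M b ∘ₗ tensorPair δ f g = tensorPair δ f (b ∘ₗ g) :=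
  map_comp_tensorPair δ LinearMap.id b f g

theorem rTensor_comp_tensorPair (a : M →ₗ[R] P) (f : Y →ₗ[R] M) (g : Y →ₗ[R] N) :
    rTensor N a ∘ₗ tensorPair δ f g = tensorPair δ (a ∘ₗ f) g :=
  map_comp_tensorPair δ a LinearMap.id f g

theorem lTensor_comp_assoc_comp_tensorPair (b : N →ₗ[R] Q) (c : P →ₗ[R] S)
    (f : Y →ₗ[R] M) (g : Y →ₗ[R] N) (h : Y →ₗ[R] P) :
    lTensor M (TensorProduct.map b c) ∘ₗ (TensorProduct.assoc R M N P).toLinearMap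
        ∘ₗ tensorPair δ (tensorPair δ f g) h
      = (TensorProduct.assoc R M Q S).toLinearMap
        ∘ₗ tensorPair δ (tensorPair δ f (b ∘ₗ g)) (c ∘ₗ h) := by
  rw [← comp_assoc, lTensor, map_map_comp_assoc_eq, comp_assoc, map_comp_tensorPair,
    map_comp_tensorPair, id_comp]

theorem rTensor_comp_assoc_symm_comp_tensorPair (a : M →ₗ[R] Q) (b : N →ₗ[R] S)
    (f : Y →ₗ[R] M) (g : Y →ₗ[R] N) (h : Y →ₗ[R] P) :
    rTensor P (TensorProduct.map a b) ∘ₗ (TensorProduct.assoc R M N P).symm.toLinearMap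
        ∘ₗ tensorPair δ f (tensorPair δ g h)
      = (TensorProduct.assoc R Q S P).symm.toLinearMap
        ∘ₗ tensorPair δ (a ∘ₗ f) (tensorPair δ (b ∘ₗ g) h) := by
  rw [← comp_assoc, rTensor, map_map_comp_assoc_symm_eq, comp_assoc, map_comp_tensorPair,
    map_comp_tensorPair, id_comp]

theorem tensorPair_tensorPair_eq_assoc_of_id {f : Y →ₗ[R] M} {g : Y →ₗ[R] N}
    (H : tensorPair δ LinearMap.id (tensorPair δ f g)
      = (TensorProduct.assoc R Y M N).toLinearMap ∘ₗ tensorPair δ (tensorPair δ LinearMap.id f) g)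
    (q : Y →ₗ[R] P) :
    tensorPair δ q (tensorPair δ f g)
      = (TensorProduct.assoc R P M N).toLinearMap ∘ₗ tensorPair δ (tensorPair δ q f) g := by
  have := congrArg (rTensor (M ⊗[R] N) q ∘ₗ ·) H
  have hnat : rTensor (M ⊗[R] N) q ∘ₗ (TensorProduct.assoc R Y M N).toLinearMap
      = (TensorProduct.assoc R P M N).toLinearMap ∘ₗ rTensor N (rTensor M q) := by
    ext; rfl
  simp only [rTensor_comp_tensorPair, comp_id] at this
  rw [this, ← comp_assoc, hnat, comp_assoc, rTensor_comp_tensorPair, rTensor_comp_tensorPair,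
    comp_id]

theorem tensorPair_tensorPair_eq_assoc_symm_of_id {f : Y →ₗ[R] M} {g : Y →ₗ[R] N}
    (H : tensorPair δ (tensorPair δ f g) LinearMap.id
      = (TensorProduct.assoc R M N Y).symm.toLinearMap
          ∘ₗ tensorPair δ f (tensorPair δ g LinearMap.id))
    (q : Y →ₗ[R] P) :
    tensorPair δ (tensorPair δ f g) q
      = (TensorProduct.assoc R M N P).symm.toLinearMap ∘ₗ tensorPair δ f (tensorPair δ g q) := by
  have := congrArg (lTensor (M ⊗[R] N) q ∘ₗ ·) H
  have hnat : lTensor (M ⊗[R] N) q ∘ₗ (TensorProduct.assoc R M N Y).symm.toLinearMap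
      = (TensorProduct.assoc R M N P).symm.toLinearMap ∘ₗ lTensor M (lTensor N q) := by
    ext; rfl
  simp only [lTensor_comp_tensorPair, comp_id] at this
  rw [this, ← comp_assoc, hnat, comp_assoc, lTensor_comp_tensorPair, lTensor_comp_tensorPair,
    comp_id]

theorem lid_comp_lTensor (f : M →ₗ[R] N) :
    (TensorProduct.lid R N).toLinearMap ∘ₗ lTensor R f
      = f ∘ₗ (TensorProduct.lid R M).toLinearMap := by
  ext; simp

theorem rid_comp_rTensor (f : M →ₗ[R] N) :
    (TensorProduct.rid R N).toLinearMap ∘ₗ rTensor R f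
      = f ∘ₗ (TensorProduct.rid R M).toLinearMap := by
  ext; simp

theorem lid_comp_tensorPair {ε : Y →ₗ[R] R}
    (hε : (TensorProduct.lid R Y).toLinearMap ∘ₗ rTensor Y ε ∘ₗ δ = LinearMap.id)
    (f : Y →ₗ[R] M) :
    (TensorProduct.lid R M).toLinearMap ∘ₗ tensorPair δ ε f = f := by
  rw [tensorPair, ← lTensor_comp_rTensor, comp_assoc, ← comp_assoc, lid_comp_lTensor,
    comp_assoc, hε, comp_id]

theorem rid_comp_tensorPair {ε : Y →ₗ[R] R}
    (hε : (TensorProduct.rid R Y).toLinearMap ∘ₗ lTensor Y ε ∘ₗ δ = LinearMap.id)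
    (f : Y →ₗ[R] M) :
    (TensorProduct.rid R M).toLinearMap ∘ₗ tensorPair δ f ε = f := by
  rw [tensorPair, ← rTensor_comp_lTensor, comp_assoc, ← comp_assoc, rid_comp_rTensor,
    comp_assoc, hε, comp_id]

end TensorPair

section Cofactorization

variable {F : Type u} [Field F] {Y D B : Type u}
  [AddCommGroup Y] [Module F Y] [AddCommGroup D] [Module F D] [AddCommGroup B] [Module F B]

theorem tensorPair_comp_mu (QY : HopfCoQG F Y) {μD : D ⊗[F] D →ₗ[F] D} {μB : B ⊗[F] B →ₗ[F] B}
    {p : Y →ₗ[F] D} {q : Y →ₗ[F] B} (hp : p ∘ₗ QY.mu = μD ∘ₗ TensorProduct.map p p)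
    (hq : q ∘ₗ QY.mu = μB ∘ₗ TensorProduct.map q q) :
    tensorPair QY.delta p q ∘ₗ QY.mu
      = tensorMu F μD μB
        ∘ₗ TensorProduct.map (tensorPair QY.delta p q) (tensorPair QY.delta p q) := by
  rw [tensorPair, comp_assoc, QY.delta_mu, ← comp_assoc, ← TensorProduct.map_comp, hp, hq,
    TensorProduct.map_comp, comp_assoc,
    ← comp_assoc _ _ (TensorProduct.map (TensorProduct.map p p) _),
    ← tensorTensorTensorComm_comp_map, tensorMu, TensorProduct.map_comp]
  rfl

theorem tensorPair_comp_eta (QY : HopfCoQG F Y) {ηD : F →ₗ[F] D} {ηB : F →ₗ[F] B}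
    {p : Y →ₗ[F] D} {q : Y →ₗ[F] B} (hp : p ∘ₗ QY.eta = ηD) (hq : q ∘ₗ QY.eta = ηB) :
    tensorPair QY.delta p q ∘ₗ QY.eta = tensorEta F ηD ηB := by
  rw [tensorPair, comp_assoc, QY.delta_eta, ← comp_assoc, ← TensorProduct.map_comp, hp, hq,
    tensorEta]

variable {QY : HopfCoQG F Y} {QD : HopfCoQG F D} {QB : HopfCoQG F B}
  {pD : Y →ₗ[F] D} {pB : Y →ₗ[F] B}

namespace Cofactorizes

variable (hcof : Cofactorizes F QY QD QB pD pB)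
include hcof

theorem surjective_tensorPair : Function.Surjective (tensorPair QY.delta pD pB) :=
  hcof.1.2

theorem tensorPair_tensorPair_pD_pB {P : Type*} [AddCommGroup P] [Module F P] (q : Y →ₗ[F] P) :
    tensorPair QY.delta q (tensorPair QY.delta pD pB)
      = (TensorProduct.assoc F P D B).toLinearMap
        ∘ₗ tensorPair QY.delta (tensorPair QY.delta q pD) pB :=
  tensorPair_tensorPair_eq_assoc_of_id QY.delta hcof.2.1 q

theorem tensorPair_pD_pB_tensorPair {P : Type*} [AddCommGroup P] [Module F P] (q : Y →ₗ[F] P) :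
    tensorPair QY.delta (tensorPair QY.delta pD pB) q
      = (TensorProduct.assoc F D B P).symm.toLinearMap
        ∘ₗ tensorPair QY.delta pD (tensorPair QY.delta pB q) :=
  tensorPair_tensorPair_eq_assoc_symm_of_id QY.delta hcof.2.2.1 q

theorem tensorPair_tensorPair_antipodes {P : Type*} [AddCommGroup P] [Module F P]
    (q : Y →ₗ[F] P) :
    tensorPair QY.delta q (tensorPair QY.delta (QB.lam ∘ₗ pB) (QD.lam ∘ₗ pD))
      = (TensorProduct.assoc F P B D).toLinearMap
        ∘ₗ tensorPair QY.delta (tensorPair QY.delta q (QB.lam ∘ₗ pB)) (QD.lam ∘ₗ pD) := by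
  have H := hcof.2.2.2.1
  rw [vMap, ← comp_assoc, ← TensorProduct.map_comp] at H
  exact tensorPair_tensorPair_eq_assoc_of_id QY.delta H q

theorem tensorPair_antipodes_tensorPair {P : Type*} [AddCommGroup P] [Module F P]
    (q : Y →ₗ[F] P) :
    tensorPair QY.delta (tensorPair QY.delta (QB.lam ∘ₗ pB) (QD.lam ∘ₗ pD)) q
      = (TensorProduct.assoc F B D P).symm.toLinearMap
        ∘ₗ tensorPair QY.delta (QB.lam ∘ₗ pB) (tensorPair QY.delta (QD.lam ∘ₗ pD) q) := by
  have H := hcof.2.2.2.2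
  rw [vMap, ← comp_assoc, ← TensorProduct.map_comp] at H
  exact tensorPair_tensorPair_eq_assoc_symm_of_id QY.delta H q

variable {Ω : D ⊗[F] B →ₗ[F] B ⊗[F] D}
  (hΩ : Ω ∘ₗ tensorPair QY.delta pD pB = tensorPair QY.delta pB pD)
include hΩ

theorem coDistLaw_delta_left (hδB : QB.delta ∘ₗ pB = tensorPair QY.delta pB pB) :
    lTensor B (TensorProduct.map QB.lam QD.lam) ∘ₗ (TensorProduct.assoc F B B D).toLinearMap
        ∘ₗ rTensor D QB.delta ∘ₗ Ω
      = lTensor B (TensorProduct.map QB.lam QD.lam) ∘ₗ lTensor B Ω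
        ∘ₗ (TensorProduct.assoc F B D B).toLinearMap ∘ₗ rTensor B Ω
        ∘ₗ (TensorProduct.assoc F D B B).symm.toLinearMap ∘ₗ lTensor D QB.delta := by
  refine (cancel_right hcof.surjective_tensorPair).1 ?_
  simp only [comp_assoc]
  rw [hΩ, rTensor_comp_tensorPair, hδB, lTensor_comp_assoc_comp_tensorPair,
    ← hcof.tensorPair_tensorPair_antipodes, lTensor_comp_tensorPair, hδB,
    ← hcof.tensorPair_pD_pB_tensorPair, rTensor_comp_tensorPair, hΩ,
    ← hcof.tensorPair_tensorPair_pD_pB, lTensor_comp_tensorPair, hΩ, lTensor_comp_tensorPair,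
    map_comp_tensorPair]

theorem coDistLaw_delta_right (hδD : QD.delta ∘ₗ pD = tensorPair QY.delta pD pD) :
    rTensor D (TensorProduct.map QB.lam QD.lam) ∘ₗ (TensorProduct.assoc F B D D).symm.toLinearMap
        ∘ₗ lTensor B QD.delta ∘ₗ Ω
      = rTensor D (TensorProduct.map QB.lam QD.lam) ∘ₗ rTensor D Ω
        ∘ₗ (TensorProduct.assoc F D B D).symm.toLinearMap ∘ₗ lTensor D Ω
        ∘ₗ (TensorProduct.assoc F D D B).toLinearMap ∘ₗ rTensor B QD.delta := by
  refine (cancel_right hcof.surjective_tensorPair).1 ?_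
  simp only [comp_assoc]
  rw [hΩ, lTensor_comp_tensorPair, hδD, rTensor_comp_assoc_symm_comp_tensorPair,
    ← hcof.tensorPair_antipodes_tensorPair, rTensor_comp_tensorPair, hδD,
    ← hcof.tensorPair_tensorPair_pD_pB, lTensor_comp_tensorPair, hΩ,
    ← hcof.tensorPair_pD_pB_tensorPair, rTensor_comp_tensorPair, hΩ, rTensor_comp_tensorPair,
    map_comp_tensorPair]

end Cofactorizes

section OfCompTensorPair

variable {Ω : D ⊗[F] B →ₗ[F] B ⊗[F] D}
  (hΩ : Ω ∘ₗ tensorPair QY.delta pD pB = tensorPair QY.delta pB pD)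
include hΩ

theorem comp_tensorEta_eq (hηD : pD ∘ₗ QY.eta = QD.eta) (hηB : pB ∘ₗ QY.eta = QB.eta) :
    Ω ∘ₗ tensorEta F QD.eta QB.eta = tensorEta F QB.eta QD.eta := by
  rw [← tensorPair_comp_eta QY hηD hηB, ← comp_assoc, hΩ, tensorPair_comp_eta QY hηB hηD]

variable (hu : Function.Surjective (tensorPair QY.delta pD pB))
include hu

theorem coDistLaw_eps_left (hεB : QB.eps ∘ₗ pB = QY.eps) :
    (TensorProduct.lid F D).toLinearMap ∘ₗ rTensor D QB.eps ∘ₗ Ω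
      = (TensorProduct.rid F D).toLinearMap ∘ₗ lTensor D QB.eps := by
  refine (cancel_right hu).1 ?_
  simp only [comp_assoc]
  rw [hΩ, rTensor_comp_tensorPair, hεB, lid_comp_tensorPair _ QY.counit_left,
    lTensor_comp_tensorPair, hεB, rid_comp_tensorPair _ QY.counit_right]

theorem coDistLaw_eps_right (hεD : QD.eps ∘ₗ pD = QY.eps) :
    (TensorProduct.rid F B).toLinearMap ∘ₗ lTensor B QD.eps ∘ₗ Ω
      = (TensorProduct.lid F B).toLinearMap ∘ₗ rTensor B QD.eps := by
  refine (cancel_right hu).1 ?_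
  simp only [comp_assoc]
  rw [hΩ, lTensor_comp_tensorPair, hεD, rid_comp_tensorPair _ QY.counit_right,
    rTensor_comp_tensorPair, hεD, lid_comp_tensorPair _ QY.counit_left]

theorem comp_tensorMu_eq (hμD : pD ∘ₗ QY.mu = QD.mu ∘ₗ TensorProduct.map pD pD)
    (hμB : pB ∘ₗ QY.mu = QB.mu ∘ₗ TensorProduct.map pB pB) :
    Ω ∘ₗ tensorMu F QD.mu QB.mu = tensorMu F QB.mu QD.mu ∘ₗ TensorProduct.map Ω Ω := by
  refine (cancel_right (TensorProduct.map_surjective hu hu)).1 ?_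
  simp only [comp_assoc]
  rw [← tensorPair_comp_mu QY hμD hμB, ← comp_assoc, hΩ, tensorPair_comp_mu QY hμB hμD, ← hΩ,
    TensorProduct.map_comp]

end OfCompTensorPair

end Cofactorization

theorem stmt10_cofactorization_gives_monoidal_codistributive_law_general
    {F : Type u} [Field F] {Y D B : Type u}
    [AddCommGroup Y] [Module F Y] [AddCommGroup D] [Module F D] [AddCommGroup B] [Module F B]
    (QY : HopfCoQG F Y) (QD : HopfCoQG F D) (QB : HopfCoQG F B)
    (pD : Y →ₗ[F] D) (pB : Y →ₗ[F] B)
    (hmD : IsHopfCoQGMor F QY QD pD) (hmB : IsHopfCoQGMor F QY QB pB)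
    (hcof : Cofactorizes F QY QD QB pD pB) :
    IsMonoidalCoDL F QD QB
      (vMap F QY pB pD ∘ₗ (LinearEquiv.ofBijective (uMap F QY pD pB) hcof.1).symm.toLinearMap) := by
  obtain ⟨hηD, hμD, hεD, hδD⟩ := hmD
  obtain ⟨hηB, hμB, hεB, hδB⟩ := hmB
  have hΩ := comp_ofBijective_symm_comp (vMap F QY pB pD) hcof.1
  have hu := hcof.surjective_tensorPair
  exact ⟨⟨hcof.coDistLaw_delta_left hΩ hδB.symm, hcof.coDistLaw_delta_right hΩ hδD.symm,
      coDistLaw_eps_left hΩ hu hεB, coDistLaw_eps_right hΩ hu hεD⟩,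
    comp_tensorMu_eq hΩ hu hμD hμB, comp_tensorEta_eq hΩ hηD hηB⟩

/-- if `Y` cofactorizes as `Y = D•B` then `Ω = v_Y∘u_Y⁻¹` is a monoidal
codistributive law of `D` over `B`. -/
theorem stmt10_cofactorization_gives_monoidal_codistributive_law
    {F : Type u} [Field F] {Y D B : Type u}
    [AddCommGroup Y] [Module F Y] [AddCommGroup D] [Module F D] [AddCommGroup B] [Module F B]
    (QY : HopfCoQG F Y) (QD : HopfCoQG F D) (QB : HopfCoQG F B)
    (pD : Y →ₗ[F] D) (pB : Y →ₗ[F] B)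
    (hpD : Function.Surjective pD) (hpB : Function.Surjective pB)
    (hmD : IsHopfCoQGMor F QY QD pD) (hmB : IsHopfCoQGMor F QY QB pB)
    (hcof : Cofactorizes F QY QD QB pD pB) :
    IsMonoidalCoDL F QD QB
      (vMap F QY pB pD ∘ₗ (LinearEquiv.ofBijective (uMap F QY pD pB) hcof.1).symm.toLinearMap) :=
  stmt10_cofactorization_gives_monoidal_codistributive_law_general QY QD QB pD pB hmD hmB hcof
end
end

section
/- Let Y be a Hopf coquasigroup over a field F and let D, B be Hopf coquasigroups whose antipodes λ_D and λ_B are bijective, equipped with surjective Hopf coquasigroup morphisms p_D : Y → D and p_B : Y → B such that Y cofactorizes as Y = D•B. Let Ω = v_Y∘u_Y⁻¹, which is an a-monoidal codistributive law of D over B. Then u_Y is an isomorphism of Hopf coquasigroups from Y to the wreath coproduct D⊗_Ω B, i.e. u_Y is bijective and preserves unit, product, counit and coproduct of the wreath coproduct structure. -/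
open TensorProduct LinearMap

noncomputable section

universe u

/-! The first two identities of a cofactorization say that splitting `y : Y` into three legs by
`(δ_Y⊗Y)∘δ_Y` or by `(Y⊗δ_Y)∘δ_Y` gives the same result once two adjacent legs are `p_D, p_B`;
by naturality the remaining leg may then be arbitrary. Unit, product and counit are preserved
because `p_D, p_B` are morphisms and `δ_Y` is multiplicative. For the coproduct, these identities
and `Ω∘u_Y = v_Y` bring both `(u_Y⊗u_Y)∘δ_Y` and `(D⊗Ω⊗B)∘(δ_D⊗δ_B)∘u_Y` to the form
`(D⊗Ω⊗B)∘(p_D⊗((p_D⊗p_B⊗p_B)∘(δ_Y⊗Y)∘δ_Y))∘δ_Y`. -/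

section Triple

variable {R : Type*} [CommSemiring R] {Y X₁ X₂ X₃ Z₁ Z₂ Z₃ : Type*}
  [AddCommMonoid Y] [Module R Y]
  [AddCommMonoid X₁] [Module R X₁] [AddCommMonoid X₂] [Module R X₂]
  [AddCommMonoid X₃] [Module R X₃] [AddCommMonoid Z₁] [Module R Z₁]
  [AddCommMonoid Z₂] [Module R Z₂] [AddCommMonoid Z₃] [Module R Z₃]

/-- `(f⊗g⊗h)∘(δ⊗Y)∘δ` and, below, `(f⊗g⊗h)∘(Y⊗δ)∘δ`, both read in `X₁⊗(X₂⊗X₃)`. -/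
def tripleLeft (δ : Y →ₗ[R] Y ⊗[R] Y) (f : Y →ₗ[R] X₁) (g : Y →ₗ[R] X₂) (h : Y →ₗ[R] X₃) :
    Y →ₗ[R] X₁ ⊗[R] (X₂ ⊗[R] X₃) :=
  (TensorProduct.assoc R X₁ X₂ X₃).toLinearMap ∘ₗ map (map f g ∘ₗ δ) h ∘ₗ δ

def tripleRight (δ : Y →ₗ[R] Y ⊗[R] Y) (f : Y →ₗ[R] X₁) (g : Y →ₗ[R] X₂) (h : Y →ₗ[R] X₃) :
    Y →ₗ[R] X₁ ⊗[R] (X₂ ⊗[R] X₃) :=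
  map f (map g h ∘ₗ δ) ∘ₗ δ

variable (δ : Y →ₗ[R] Y ⊗[R] Y) (f : Y →ₗ[R] X₁) (g : Y →ₗ[R] X₂) (h : Y →ₗ[R] X₃)
  (f' : X₁ →ₗ[R] Z₁) (g' : X₂ →ₗ[R] Z₂) (h' : X₃ →ₗ[R] Z₃)

theorem map_map_comp_tripleLeft :
    map f' (map g' h') ∘ₗ tripleLeft δ f g h = tripleLeft δ (f' ∘ₗ f) (g' ∘ₗ g) (h' ∘ₗ h) := by
  simp only [tripleLeft, ← comp_assoc, map_map_comp_assoc_eq]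
  simp only [comp_assoc, ← map_comp]
  rw [map_comp f' g' f g, comp_assoc]

theorem map_map_comp_tripleRight :
    map f' (map g' h') ∘ₗ tripleRight δ f g h = tripleRight δ (f' ∘ₗ f) (g' ∘ₗ g) (h' ∘ₗ h) := by
  simp only [tripleRight, ← comp_assoc, ← map_comp]

end Triple

section UMap

variable {F : Type u} [Field F] {Y D B X : Type u}
  [AddCommGroup Y] [Module F Y] [AddCommGroup D] [Module F D] [AddCommGroup B] [Module F B]
  [AddCommGroup X] [Module F X]
  {QY : HopfCoQG F Y} {QD : HopfCoQG F D} {QB : HopfCoQG F B} {pD : Y →ₗ[F] D} {pB : Y →ₗ[F] B}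

theorem HopfCoQG.tensorEps_comp_delta (Q : HopfCoQG F Y) :
    tensorEps F Q.eps Q.eps ∘ₗ Q.delta = Q.eps := by
  have h : tensorEps F Q.eps Q.eps
      = Q.eps ∘ₗ (TensorProduct.lid F Y).toLinearMap ∘ₗ rTensor Y Q.eps :=
    TensorProduct.ext' fun a b => by simp [tensorEps, smul_eq_mul]
  rw [h, comp_assoc, comp_assoc, Q.counit_left, comp_id]

theorem uMap_comp_eta (hD : pD ∘ₗ QY.eta = QD.eta) (hB : pB ∘ₗ QY.eta = QB.eta) :
    uMap F QY pD pB ∘ₗ QY.eta = tensorEta F QD.eta QB.eta := by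
  rw [uMap, comp_assoc, QY.delta_eta, ← comp_assoc, ← map_comp, hD, hB, tensorEta]

theorem uMap_comp_mu (hD : pD ∘ₗ QY.mu = QD.mu ∘ₗ map pD pD)
    (hB : pB ∘ₗ QY.mu = QB.mu ∘ₗ map pB pB) :
    uMap F QY pD pB ∘ₗ QY.mu
      = tensorMu F QD.mu QB.mu ∘ₗ map (uMap F QY pD pB) (uMap F QY pD pB) := by
  calc uMap F QY pD pB ∘ₗ QY.mu
      = map pD pB ∘ₗ map QY.mu QY.mu ∘ₗ (tensorTensorTensorComm F Y Y Y Y).toLinearMap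
          ∘ₗ map QY.delta QY.delta := by rw [uMap, comp_assoc, QY.delta_mu]
    _ = map QD.mu QB.mu ∘ₗ map (map pD pD) (map pB pB)
          ∘ₗ (tensorTensorTensorComm F Y Y Y Y).toLinearMap ∘ₗ map QY.delta QY.delta := by
      rw [← comp_assoc, ← map_comp, hD, hB, map_comp, comp_assoc]
    _ = map QD.mu QB.mu ∘ₗ (tensorTensorTensorComm F D B D B).toLinearMap
          ∘ₗ map (map pD pB) (map pD pB) ∘ₗ map QY.delta QY.delta := by
      rw [← comp_assoc (map QY.delta QY.delta), ← tensorTensorTensorComm_comp_map, comp_assoc]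
    _ = tensorMu F QD.mu QB.mu ∘ₗ map (uMap F QY pD pB) (uMap F QY pD pB) := by
      rw [uMap, map_comp, tensorMu, comp_assoc]

theorem tensorEps_comp_uMap (hD : QD.eps ∘ₗ pD = QY.eps) (hB : QB.eps ∘ₗ pB = QY.eps) :
    tensorEps F QD.eps QB.eps ∘ₗ uMap F QY pD pB = QY.eps := by
  simp only [uMap, tensorEps, comp_assoc]
  rw [← comp_assoc QY.delta, ← map_comp, hD, hB, ← comp_assoc, ← tensorEps, QY.tensorEps_comp_delta]

theorem Cofactorizes.tripleRight_eq_tripleLeft (hcof : Cofactorizes F QY QD QB pD pB)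
    (f : Y →ₗ[F] X) : tripleRight QY.delta f pD pB = tripleLeft QY.delta f pD pB := by
  have hid : tripleRight QY.delta LinearMap.id pD pB = tripleLeft QY.delta LinearMap.id pD pB :=
    hcof.2.1
  simpa only [map_map_comp_tripleRight, map_map_comp_tripleLeft, comp_id, id_comp]
    using congrArg (map f (map LinearMap.id LinearMap.id) ∘ₗ ·) hid

theorem Cofactorizes.tripleLeft_eq_tripleRight (hcof : Cofactorizes F QY QD QB pD pB)
    (h : Y →ₗ[F] X) : tripleLeft QY.delta pD pB h = tripleRight QY.delta pD pB h := by
  have hid : tripleLeft QY.delta pD pB LinearMap.id = tripleRight QY.delta pD pB LinearMap.id := by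
    change _ ∘ₗ (rTensor Y (uMap F QY pD pB) ∘ₗ QY.delta) = _
    rw [hcof.2.2.1, LinearEquiv.comp_symm_cancel_left]
    rfl
  simpa only [map_map_comp_tripleRight, map_map_comp_tripleLeft, comp_id, id_comp]
    using congrArg (map LinearMap.id (map LinearMap.id h) ∘ₗ ·) hid

variable {Ω : D ⊗[F] B →ₗ[F] B ⊗[F] D}

theorem Cofactorizes.map_pB_uMap_comp_delta (hcof : Cofactorizes F QY QD QB pD pB)
    (hΩ : Ω ∘ₗ uMap F QY pD pB = vMap F QY pB pD) :
    map pB (uMap F QY pD pB) ∘ₗ QY.delta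
      = (TensorProduct.assoc F B D B).toLinearMap ∘ₗ rTensor B Ω
          ∘ₗ (TensorProduct.assoc F D B B).symm.toLinearMap ∘ₗ tripleLeft QY.delta pD pB pB := by
  calc map pB (uMap F QY pD pB) ∘ₗ QY.delta
      = tripleLeft QY.delta pB pD pB := hcof.tripleRight_eq_tripleLeft pB
    _ = (TensorProduct.assoc F B D B).toLinearMap ∘ₗ map (Ω ∘ₗ uMap F QY pD pB) pB ∘ₗ QY.delta := by
      rw [hΩ]; rfl
    _ = _ := by
      rw [tripleLeft, LinearEquiv.symm_comp_cancel_left, ← rTensor_comp_map, comp_assoc]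
      rfl

theorem Cofactorizes.map_uMap_uMap_comp_delta (hcof : Cofactorizes F QY QD QB pD pB)
    (hΩ : Ω ∘ₗ uMap F QY pD pB = vMap F QY pB pD) :
    map (uMap F QY pD pB) (uMap F QY pD pB) ∘ₗ QY.delta
      = (TensorProduct.assoc F D B (D ⊗[F] B)).symm.toLinearMap
          ∘ₗ lTensor D ((TensorProduct.assoc F B D B).toLinearMap ∘ₗ rTensor B Ω
            ∘ₗ (TensorProduct.assoc F D B B).symm.toLinearMap)
          ∘ₗ map pD (tripleLeft QY.delta pD pB pB) ∘ₗ QY.delta := by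
  calc map (uMap F QY pD pB) (uMap F QY pD pB) ∘ₗ QY.delta
      = (TensorProduct.assoc F D B (D ⊗[F] B)).symm.toLinearMap
          ∘ₗ tripleLeft QY.delta pD pB (uMap F QY pD pB) := by
        rw [tripleLeft, LinearEquiv.symm_comp_cancel_left]; rfl
    _ = (TensorProduct.assoc F D B (D ⊗[F] B)).symm.toLinearMap
          ∘ₗ map pD (map pB (uMap F QY pD pB) ∘ₗ QY.delta) ∘ₗ QY.delta := by
      rw [hcof.tripleLeft_eq_tripleRight]; rfl
    _ = _ := by
      rw [hcof.map_pB_uMap_comp_delta hΩ, ← comp_assoc QY.delta (map pD _) (lTensor D _),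
        lTensor_comp_map]
      simp only [comp_assoc]

theorem Cofactorizes.assoc_comp_map_delta_delta_comp_uMap (hcof : Cofactorizes F QY QD QB pD pB)
    (hD : map pD pD ∘ₗ QY.delta = QD.delta ∘ₗ pD) (hB : map pB pB ∘ₗ QY.delta = QB.delta ∘ₗ pB) :
    (TensorProduct.assoc F D D (B ⊗[F] B)).toLinearMap ∘ₗ map QD.delta QB.delta
        ∘ₗ uMap F QY pD pB
      = map pD (tripleLeft QY.delta pD pB pB) ∘ₗ QY.delta := by
  calc (TensorProduct.assoc F D D (B ⊗[F] B)).toLinearMap ∘ₗ map QD.delta QB.delta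
        ∘ₗ uMap F QY pD pB
      = tripleLeft QY.delta pD pD (QB.delta ∘ₗ pB) := by
        rw [uMap, ← comp_assoc QY.delta, ← map_comp, ← hD]; rfl
    _ = tripleRight QY.delta pD pD (QB.delta ∘ₗ pB) := by
      rw [← id_comp pD, ← map_map_comp_tripleLeft, ← hcof.tripleRight_eq_tripleLeft,
        map_map_comp_tripleRight]
    _ = _ := by
      rw [hcof.tripleLeft_eq_tripleRight, ← hB]; rfl

theorem Cofactorizes.map_uMap_comp_delta (hcof : Cofactorizes F QY QD QB pD pB)
    (hD : map pD pD ∘ₗ QY.delta = QD.delta ∘ₗ pD) (hB : map pB pB ∘ₗ QY.delta = QB.delta ∘ₗ pB)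
    (hΩ : Ω ∘ₗ uMap F QY pD pB = vMap F QY pB pD) :
    map (uMap F QY pD pB) (uMap F QY pD pB) ∘ₗ QY.delta
      = wreathDelta F QD QB Ω ∘ₗ uMap F QY pD pB := by
  rw [hcof.map_uMap_uMap_comp_delta hΩ, ← hcof.assoc_comp_map_delta_delta_comp_uMap hD hB,
    wreathDelta]
  simp only [comp_assoc]

end UMap

theorem stmt12_u_is_isomorphism_to_wreath_coproduct_general
    {F : Type u} [Field F] {Y D B : Type u}
    [AddCommGroup Y] [Module F Y] [AddCommGroup D] [Module F D] [AddCommGroup B] [Module F B]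
    (QY : HopfCoQG F Y) (QD : HopfCoQG F D) (QB : HopfCoQG F B)
    (pD : Y →ₗ[F] D) (pB : Y →ₗ[F] B)
    (hmD : IsHopfCoQGMor F QY QD pD) (hmB : IsHopfCoQGMor F QY QB pB)
    (hcof : Cofactorizes F QY QD QB pD pB) :
    ∀ Ω : D ⊗[F] B →ₗ[F] B ⊗[F] D,
      Ω = vMap F QY pB pD ∘ₗ (LinearEquiv.ofBijective (uMap F QY pD pB) hcof.1).symm.toLinearMap →
      Function.Bijective (uMap F QY pD pB)
      ∧ uMap F QY pD pB ∘ₗ QY.eta = tensorEta F QD.eta QB.eta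
      ∧ uMap F QY pD pB ∘ₗ QY.mu = tensorMu F QD.mu QB.mu ∘ₗ TensorProduct.map (uMap F QY pD pB) (uMap F QY pD pB)
      ∧ tensorEps F QD.eps QB.eps ∘ₗ uMap F QY pD pB = QY.eps
      ∧ TensorProduct.map (uMap F QY pD pB) (uMap F QY pD pB) ∘ₗ QY.delta = wreathDelta F QD QB Ω ∘ₗ uMap F QY pD pB := by
  rintro Ω rfl
  obtain ⟨hDη, hDμ, hDε, hDδ⟩ := hmD
  obtain ⟨hBη, hBμ, hBε, hBδ⟩ := hmB
  have hΩ : (vMap F QY pB pD ∘ₗ (LinearEquiv.ofBijective _ hcof.1).symm.toLinearMap)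
      ∘ₗ uMap F QY pD pB = vMap F QY pB pD :=
    LinearEquiv.symm_comp_cancel_right (LinearEquiv.ofBijective _ hcof.1) _
  exact ⟨hcof.1, uMap_comp_eta hDη hBη, uMap_comp_mu hDμ hBμ, tensorEps_comp_uMap hDε hBε,
    hcof.map_uMap_comp_delta hDδ hBδ hΩ⟩

/-- `u_Y` is an isomorphism of Hopf coquasigroups from `Y` to the wreath
coproduct `D ⊗_Ω B` (with `Ω = v_Y∘u_Y⁻¹`). -/
theorem stmt12_u_is_isomorphism_to_wreath_coproduct
    {F : Type u} [Field F] {Y D B : Type u}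
    [AddCommGroup Y] [Module F Y] [AddCommGroup D] [Module F D] [AddCommGroup B] [Module F B]
    (QY : HopfCoQG F Y) (QD : HopfCoQG F D) (QB : HopfCoQG F B)
    (hlamD : Function.Bijective QD.lam) (hlamB : Function.Bijective QB.lam)
    (pD : Y →ₗ[F] D) (pB : Y →ₗ[F] B)
    (hpD : Function.Surjective pD) (hpB : Function.Surjective pB)
    (hmD : IsHopfCoQGMor F QY QD pD) (hmB : IsHopfCoQGMor F QY QB pB)
    (hcof : Cofactorizes F QY QD QB pD pB) :
    ∀ Ω : D ⊗[F] B →ₗ[F] B ⊗[F] D,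
      Ω = vMap F QY pB pD ∘ₗ (LinearEquiv.ofBijective (uMap F QY pD pB) hcof.1).symm.toLinearMap →
      Function.Bijective (uMap F QY pD pB)
      ∧ uMap F QY pD pB ∘ₗ QY.eta = tensorEta F QD.eta QB.eta
      ∧ uMap F QY pD pB ∘ₗ QY.mu = tensorMu F QD.mu QB.mu ∘ₗ TensorProduct.map (uMap F QY pD pB) (uMap F QY pD pB)
      ∧ tensorEps F QD.eps QB.eps ∘ₗ uMap F QY pD pB = QY.eps
      ∧ TensorProduct.map (uMap F QY pD pB) (uMap F QY pD pB) ∘ₗ QY.delta = wreathDelta F QD QB Ω ∘ₗ uMap F QY pD pB :=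
  stmt12_u_is_isomorphism_to_wreath_coproduct_general QY QD QB pD pB hmD hmB hcof
end
end

section
/- Let D and B be Hopf algebras over a field F (i.e. Hopf coquasigroups whose coproducts are coassociative) and let Ω : D⊗B → B⊗D be a linear map satisfying (δ_B⊗D)∘Ω = (B⊗Ω)∘(Ω⊗B)∘(D⊗δ_B), (B⊗δ_D)∘Ω = (Ω⊗D)∘(D⊗Ω)∘(δ_D⊗B), (ε_B⊗D)∘Ω = D⊗ε_B and (B⊗ε_D)∘Ω = ε_D⊗B (a codistributive law between the underlying comonoids). Then the four a-monoidal identities hold: (D⊗B⊗(μ_D∘(D⊗λ_D)))∘(D⊗Ω⊗D)∘(δ_D⊗Ω)∘(δ_D⊗B) = D⊗B⊗η_D; (D⊗B⊗(μ_D∘(λ_D⊗D)))∘(D⊗Ω⊗D)∘(δ_D⊗Ω)∘(δ_D⊗B) = D⊗B⊗η_D; ((μ_B∘(B⊗λ_B))⊗D⊗B)∘(B⊗Ω⊗B)∘(Ω⊗δ_B)∘(D⊗δ_B) = η_B⊗D⊗B; and ((μ_B∘(λ_B⊗B))⊗D⊗B)∘(B⊗Ω⊗B)∘(Ω⊗δ_B)∘(D⊗δ_B)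 = η_B⊗D⊗B. -/
open TensorProduct LinearMap

noncomputable section

universe u

/-!
Any `g` with `g ∘ δ = η ∘ ε` may replace the antipode composite, and both `μ ∘ (id ⊗ λ)`
and `μ ∘ (λ ⊗ id)` are such maps. After coassociativity rebrackets `δ`, the two crossings
of `Ω` over the pair of `D`-factors are, by the codistributive law, one crossing of `Ω`
followed by `δ`; then `g` turns that `δ` into `η ∘ ε`, the counit law for `Ω` moves `ε` back
across, and the counit axiom of `D` removes the remaining `δ`. The `B`-identities are the
mirror image.
-/

section TensorBookkeeping

variable {F : Type u} [Field F]
variable {M N P Q : Type u} [AddCommGroup M] [AddCommGroup N] [AddCommGroup P] [AddCommGroup Q]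
  [Module F M] [Module F N] [Module F P] [Module F Q]

lemma lid_comp_rTensor_comp_lTensor_comp_assoc (e : M →ₗ[F] F) (m : N ⊗[F] P →ₗ[F] Q) :
    (TensorProduct.lid F Q).toLinearMap ∘ₗ rTensor Q e ∘ₗ lTensor M m
        ∘ₗ (TensorProduct.assoc F M N P).toLinearMap
      = m ∘ₗ rTensor P ((TensorProduct.lid F N).toLinearMap ∘ₗ rTensor N e) := by
  ext x y z
  simp [← TensorProduct.smul_tmul']

lemma rid_comp_lTensor_comp_rTensor_comp_assoc_symm (e : P →ₗ[F] F)
    (m : M ⊗[F] N →ₗ[F] Q) :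
    (TensorProduct.rid F Q).toLinearMap ∘ₗ lTensor Q e ∘ₗ rTensor P m
        ∘ₗ (TensorProduct.assoc F M N P).symm.toLinearMap
      = m ∘ₗ lTensor M ((TensorProduct.rid F N).toLinearMap ∘ₗ lTensor N e) := by
  ext x y z
  simp [TensorProduct.tmul_smul]

lemma lTensor_lid_comp_rTensor_comp_assoc (e : N →ₗ[F] F) :
    lTensor M ((TensorProduct.lid F P).toLinearMap ∘ₗ rTensor P e)
        ∘ₗ (TensorProduct.assoc F M N P).toLinearMap
      = rTensor P ((TensorProduct.rid F M).toLinearMap ∘ₗ lTensor M e) := by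
  ext x y z
  simp [TensorProduct.smul_tmul]

lemma rTensor_rid_comp_lTensor_comp_assoc_symm (e : N →ₗ[F] F) :
    rTensor P ((TensorProduct.rid F M).toLinearMap ∘ₗ lTensor M e)
        ∘ₗ (TensorProduct.assoc F M N P).symm.toLinearMap
      = lTensor M ((TensorProduct.lid F P).toLinearMap ∘ₗ rTensor P e) := by
  ext x y z
  simp [TensorProduct.smul_tmul]

end TensorBookkeeping

namespace HopfCoQG

variable {F : Type u} [Field F] {D : Type u} [AddCommGroup D] [Module F D] (Q : HopfCoQG F D)

theorem mu_comp_lTensor_lam_comp_delta :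
    Q.mu ∘ₗ lTensor D Q.lam ∘ₗ Q.delta = Q.eta ∘ₗ Q.eps :=
  calc Q.mu ∘ₗ lTensor D Q.lam ∘ₗ Q.delta
      = Q.mu ∘ₗ rTensor D ((TensorProduct.lid F D).toLinearMap ∘ₗ rTensor D Q.eps)
          ∘ₗ TensorProduct.map Q.delta Q.lam ∘ₗ Q.delta := by
        rw [← LinearMap.comp_assoc _ (TensorProduct.map _ _), rTensor_comp_map,
          LinearMap.comp_assoc, Q.counit_left]
        rfl
    _ = (TensorProduct.lid F D).toLinearMap ∘ₗ rTensor D Q.eps ∘ₗ lTensor D Q.mu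
          ∘ₗ (TensorProduct.assoc F D D D).toLinearMap ∘ₗ TensorProduct.map Q.delta Q.lam
          ∘ₗ Q.delta := by
        rw [← LinearMap.comp_assoc _ (rTensor _ _), ← lid_comp_rTensor_comp_lTensor_comp_assoc]
        simp only [LinearMap.comp_assoc]
    _ = Q.eta ∘ₗ Q.eps := by
        rw [Q.antipode_l1]
        ext x
        simp [← map_smul]

theorem mu_comp_rTensor_lam_comp_delta :
    Q.mu ∘ₗ rTensor D Q.lam ∘ₗ Q.delta = Q.eta ∘ₗ Q.eps :=
  calc Q.mu ∘ₗ rTensor D Q.lam ∘ₗ Q.delta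
      = Q.mu ∘ₗ lTensor D ((TensorProduct.rid F D).toLinearMap ∘ₗ lTensor D Q.eps)
          ∘ₗ TensorProduct.map Q.lam Q.delta ∘ₗ Q.delta := by
        rw [← LinearMap.comp_assoc _ (TensorProduct.map _ _), lTensor_comp_map,
          LinearMap.comp_assoc, Q.counit_right]
        rfl
    _ = (TensorProduct.rid F D).toLinearMap ∘ₗ lTensor D Q.eps ∘ₗ rTensor D Q.mu
          ∘ₗ (TensorProduct.assoc F D D D).symm.toLinearMap ∘ₗ TensorProduct.map Q.lam Q.delta
          ∘ₗ Q.delta := by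
        rw [← LinearMap.comp_assoc _ (lTensor _ _),
          ← rid_comp_lTensor_comp_rTensor_comp_assoc_symm]
        simp only [LinearMap.comp_assoc]
    _ = Q.eta ∘ₗ Q.eps := by
        rw [Q.antipode_r1]
        ext x
        simp [← map_smul]

end HopfCoQG

section CodistributiveLaw

variable {F : Type u} [Field F]
variable {D B : Type u} [AddCommGroup D] [Module F D] [AddCommGroup B] [Module F B]

def passPairLeft (W : D ⊗[F] B →ₗ[F] B ⊗[F] D) :
    (D ⊗[F] D) ⊗[F] B →ₗ[F] B ⊗[F] (D ⊗[F] D) :=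
  (TensorProduct.assoc F B D D).toLinearMap ∘ₗ rTensor D W
    ∘ₗ (TensorProduct.assoc F D B D).symm.toLinearMap ∘ₗ lTensor D W
    ∘ₗ (TensorProduct.assoc F D D B).toLinearMap

lemma lTensor_comp_eq_passPairLeft_comp {d : D →ₗ[F] D ⊗[F] D}
    {W : D ⊗[F] B →ₗ[F] B ⊗[F] D}
    (h : (TensorProduct.assoc F B D D).symm.toLinearMap ∘ₗ lTensor B d ∘ₗ W
        = rTensor D W ∘ₗ (TensorProduct.assoc F D B D).symm.toLinearMap ∘ₗ lTensor D W
            ∘ₗ (TensorProduct.assoc F D D B).toLinearMap ∘ₗ rTensor B d) :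
    lTensor B d ∘ₗ W = passPairLeft W ∘ₗ rTensor B d := by
  simp only [passPairLeft, LinearMap.comp_assoc, ← h, LinearEquiv.comp_symm_assoc]

lemma passPairLeft_comp (d : D →ₗ[F] D ⊗[F] D) (W : D ⊗[F] B →ₗ[F] B ⊗[F] D) :
    lTensor D (TensorProduct.assoc F B D D).toLinearMap ∘ₗ lTensor D (rTensor D W)
        ∘ₗ lTensor D (TensorProduct.assoc F D B D).symm.toLinearMap
        ∘ₗ (TensorProduct.assoc F D D (B ⊗[F] D)).toLinearMap ∘ₗ TensorProduct.map d W
        ∘ₗ (TensorProduct.assoc F D D B).toLinearMap ∘ₗ rTensor B d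
      = lTensor D (passPairLeft W) ∘ₗ (TensorProduct.assoc F D (D ⊗[F] D) B).toLinearMap
        ∘ₗ rTensor B ((TensorProduct.assoc F D D D).toLinearMap ∘ₗ rTensor D d ∘ₗ d) := by
  apply TensorProduct.ext'
  intro x y
  simp only [passPairLeft, coe_comp, Function.comp_apply, rTensor_tmul, LinearEquiv.coe_coe]
  induction d x using TensorProduct.induction_on with
  | zero => simp
  | add u v hu hv => simp only [map_add, add_tmul, hu, hv]
  | tmul a b =>
    simp only [assoc_tmul, map_tmul, rTensor_tmul]
    induction d a using TensorProduct.induction_on with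
    | zero => simp
    | add u v hu hv => simp only [map_add, add_tmul, hu, hv]
    | tmul a₁ a₂ => simp

lemma lTensor_eta_eps_comp_assoc_rTensor_delta (QD : HopfCoQG F D)
    {W : D ⊗[F] B →ₗ[F] B ⊗[F] D}
    (h : (TensorProduct.rid F B).toLinearMap ∘ₗ lTensor B QD.eps ∘ₗ W
        = (TensorProduct.lid F B).toLinearMap ∘ₗ rTensor B QD.eps) :
    lTensor D (lTensor B (QD.eta ∘ₗ QD.eps) ∘ₗ W)
        ∘ₗ (TensorProduct.assoc F D D B).toLinearMap ∘ₗ rTensor B QD.delta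
      = lTensor D (lTensor B QD.eta ∘ₗ (TensorProduct.rid F B).symm.toLinearMap) := by
  have hW : lTensor B (QD.eta ∘ₗ QD.eps) ∘ₗ W = (lTensor B QD.eta
      ∘ₗ (TensorProduct.rid F B).symm.toLinearMap) ∘ₗ (TensorProduct.lid F B).toLinearMap
      ∘ₗ rTensor B QD.eps := by
    rw [← h, lTensor_comp]
    simp only [LinearMap.comp_assoc, LinearEquiv.symm_comp_assoc]
  calc lTensor D (lTensor B (QD.eta ∘ₗ QD.eps) ∘ₗ W)
        ∘ₗ (TensorProduct.assoc F D D B).toLinearMap ∘ₗ rTensor B QD.delta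
      = lTensor D (lTensor B QD.eta ∘ₗ (TensorProduct.rid F B).symm.toLinearMap)
          ∘ₗ (lTensor D ((TensorProduct.lid F B).toLinearMap ∘ₗ rTensor B QD.eps)
          ∘ₗ (TensorProduct.assoc F D D B).toLinearMap) ∘ₗ rTensor B QD.delta := by
        rw [hW, lTensor_comp]
        simp only [LinearMap.comp_assoc]
    _ = lTensor D (lTensor B QD.eta ∘ₗ (TensorProduct.rid F B).symm.toLinearMap) := by
        rw [lTensor_lid_comp_rTensor_comp_assoc, ← rTensor_comp, LinearMap.comp_assoc,
          QD.counit_right, rTensor_id, LinearMap.comp_id]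

lemma aMonoidal_left_of_comp_delta_eq (QD : HopfCoQG F D) (Ω : D ⊗[F] B →ₗ[F] B ⊗[F] D)
    (hcoD : (TensorProduct.assoc F D D D).toLinearMap ∘ₗ rTensor D QD.delta ∘ₗ QD.delta
        = lTensor D QD.delta ∘ₗ QD.delta)
    (h2 : (TensorProduct.assoc F B D D).symm.toLinearMap ∘ₗ lTensor B QD.delta ∘ₗ Ω
        = rTensor D Ω ∘ₗ (TensorProduct.assoc F D B D).symm.toLinearMap ∘ₗ lTensor D Ω
            ∘ₗ (TensorProduct.assoc F D D B).toLinearMap ∘ₗ rTensor B QD.delta)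
    (h4 : (TensorProduct.rid F B).toLinearMap ∘ₗ lTensor B QD.eps ∘ₗ Ω
        = (TensorProduct.lid F B).toLinearMap ∘ₗ rTensor B QD.eps)
    {g : D ⊗[F] D →ₗ[F] D} (hg : g ∘ₗ QD.delta = QD.eta ∘ₗ QD.eps) :
    lTensor D (lTensor B g)
        ∘ₗ lTensor D (TensorProduct.assoc F B D D).toLinearMap
        ∘ₗ lTensor D (rTensor D Ω)
        ∘ₗ lTensor D (TensorProduct.assoc F D B D).symm.toLinearMap
        ∘ₗ (TensorProduct.assoc F D D (B ⊗[F] D)).toLinearMap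
        ∘ₗ TensorProduct.map QD.delta Ω
        ∘ₗ (TensorProduct.assoc F D D B).toLinearMap
        ∘ₗ rTensor B QD.delta
      = lTensor D (lTensor B QD.eta ∘ₗ (TensorProduct.rid F B).symm.toLinearMap) :=
  calc _ = lTensor D (lTensor B g) ∘ₗ lTensor D (passPairLeft Ω)
          ∘ₗ (TensorProduct.assoc F D (D ⊗[F] D) B).toLinearMap
          ∘ₗ rTensor B (lTensor D QD.delta ∘ₗ QD.delta) := by
        rw [passPairLeft_comp, hcoD]
    _ = lTensor D (lTensor B g ∘ₗ passPairLeft Ω ∘ₗ rTensor B QD.delta)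
          ∘ₗ (TensorProduct.assoc F D D B).toLinearMap ∘ₗ rTensor B QD.delta := by
        rw [rTensor_comp, ← LinearMap.comp_assoc _ (rTensor B (lTensor D QD.delta)),
          ← lTensor_rTensor_comp_assoc]
        simp only [lTensor_comp, LinearMap.comp_assoc]
    _ = lTensor D (lTensor B (QD.eta ∘ₗ QD.eps) ∘ₗ Ω)
          ∘ₗ (TensorProduct.assoc F D D B).toLinearMap ∘ₗ rTensor B QD.delta := by
        rw [← lTensor_comp_eq_passPairLeft_comp h2, ← LinearMap.comp_assoc Ω, ← lTensor_comp,
          hg]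
    _ = _ := lTensor_eta_eps_comp_assoc_rTensor_delta QD h4

def passPairRight (W : D ⊗[F] B →ₗ[F] B ⊗[F] D) :
    D ⊗[F] (B ⊗[F] B) →ₗ[F] (B ⊗[F] B) ⊗[F] D :=
  (TensorProduct.assoc F B B D).symm.toLinearMap ∘ₗ lTensor B W
    ∘ₗ (TensorProduct.assoc F B D B).toLinearMap ∘ₗ rTensor B W
    ∘ₗ (TensorProduct.assoc F D B B).symm.toLinearMap

lemma rTensor_comp_eq_passPairRight_comp {d : B →ₗ[F] B ⊗[F] B}
    {W : D ⊗[F] B →ₗ[F] B ⊗[F] D}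
    (h : (TensorProduct.assoc F B B D).toLinearMap ∘ₗ rTensor D d ∘ₗ W
        = lTensor B W ∘ₗ (TensorProduct.assoc F B D B).toLinearMap ∘ₗ rTensor B W
            ∘ₗ (TensorProduct.assoc F D B B).symm.toLinearMap ∘ₗ lTensor D d) :
    rTensor D d ∘ₗ W = passPairRight W ∘ₗ lTensor D d := by
  simp only [passPairRight, LinearMap.comp_assoc, ← h, LinearEquiv.symm_comp_assoc]

lemma passPairRight_comp (d : B →ₗ[F] B ⊗[F] B) (W : D ⊗[F] B →ₗ[F] B ⊗[F] D) :
    (TensorProduct.assoc F B B (D ⊗[F] B)).symm.toLinearMap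
        ∘ₗ lTensor B (TensorProduct.assoc F B D B).toLinearMap ∘ₗ lTensor B (rTensor B W)
        ∘ₗ lTensor B (TensorProduct.assoc F D B B).symm.toLinearMap
        ∘ₗ (TensorProduct.assoc F B D (B ⊗[F] B)).toLinearMap ∘ₗ TensorProduct.map W d
        ∘ₗ (TensorProduct.assoc F D B B).symm.toLinearMap ∘ₗ lTensor D d
      = (TensorProduct.assoc F (B ⊗[F] B) D B).toLinearMap ∘ₗ rTensor B (passPairRight W)
        ∘ₗ (TensorProduct.assoc F D (B ⊗[F] B) B).symm.toLinearMap
        ∘ₗ lTensor D ((TensorProduct.assoc F B B B).symm.toLinearMap ∘ₗ lTensor B d ∘ₗ d) := by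
  apply TensorProduct.ext'
  intro x y
  simp only [passPairRight, coe_comp, Function.comp_apply, lTensor_tmul, LinearEquiv.coe_coe]
  induction d y using TensorProduct.induction_on with
  | zero => simp
  | add u v hu hv => simp only [map_add, tmul_add, hu, hv]
  | tmul a b =>
    simp only [assoc_symm_tmul, map_tmul, lTensor_tmul]
    induction d b using TensorProduct.induction_on with
    | zero => simp
    | add u v hu hv => simp only [map_add, tmul_add, hu, hv]
    | tmul b₁ b₂ =>
      simp only [assoc_symm_tmul, rTensor_tmul, coe_comp, Function.comp_apply,
        LinearEquiv.coe_coe]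
      induction W (x ⊗ₜ[F] a) using TensorProduct.induction_on with
      | zero => simp
      | add u v hu hv => simp only [map_add, add_tmul, hu, hv]
      | tmul c e =>
        simp only [assoc_tmul, assoc_symm_tmul, rTensor_tmul, lTensor_tmul, LinearEquiv.coe_coe]
        induction W (e ⊗ₜ[F] b₁) using TensorProduct.induction_on with
        | zero => simp
        | add u v hu hv => simp only [map_add, add_tmul, tmul_add, hu, hv]
        | tmul c' e' => simp

lemma assoc_rTensor_eta_eps_comp_assoc_symm_lTensor_delta (QB : HopfCoQG F B)
    {W : D ⊗[F] B →ₗ[F] B ⊗[F] D}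
    (h : (TensorProduct.lid F D).toLinearMap ∘ₗ rTensor D QB.eps ∘ₗ W
        = (TensorProduct.rid F D).toLinearMap ∘ₗ lTensor D QB.eps) :
    (TensorProduct.assoc F B D B).toLinearMap ∘ₗ rTensor B (rTensor D (QB.eta ∘ₗ QB.eps) ∘ₗ W)
        ∘ₗ (TensorProduct.assoc F D B B).symm.toLinearMap ∘ₗ lTensor D QB.delta
      = rTensor (D ⊗[F] B) QB.eta ∘ₗ (TensorProduct.lid F (D ⊗[F] B)).symm.toLinearMap := by
  have hW : rTensor D (QB.eta ∘ₗ QB.eps) ∘ₗ W = (rTensor D QB.eta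
      ∘ₗ (TensorProduct.lid F D).symm.toLinearMap) ∘ₗ (TensorProduct.rid F D).toLinearMap
      ∘ₗ lTensor D QB.eps := by
    rw [← h, rTensor_comp]
    simp only [LinearMap.comp_assoc, LinearEquiv.symm_comp_assoc]
  calc (TensorProduct.assoc F B D B).toLinearMap
        ∘ₗ rTensor B (rTensor D (QB.eta ∘ₗ QB.eps) ∘ₗ W)
        ∘ₗ (TensorProduct.assoc F D B B).symm.toLinearMap ∘ₗ lTensor D QB.delta
      = (TensorProduct.assoc F B D B).toLinearMap
          ∘ₗ rTensor B (rTensor D QB.eta ∘ₗ (TensorProduct.lid F D).symm.toLinearMap)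
          ∘ₗ (rTensor B ((TensorProduct.rid F D).toLinearMap ∘ₗ lTensor D QB.eps)
          ∘ₗ (TensorProduct.assoc F D B B).symm.toLinearMap) ∘ₗ lTensor D QB.delta := by
        rw [hW, rTensor_comp]
        simp only [LinearMap.comp_assoc]
    _ = (TensorProduct.assoc F B D B).toLinearMap
          ∘ₗ rTensor B (rTensor D QB.eta ∘ₗ (TensorProduct.lid F D).symm.toLinearMap) := by
        rw [rTensor_rid_comp_lTensor_comp_assoc_symm, ← lTensor_comp, LinearMap.comp_assoc,
          QB.counit_left, lTensor_id, LinearMap.comp_id]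
    _ = _ := by
        ext x y
        simp

lemma aMonoidal_right_of_comp_delta_eq (QB : HopfCoQG F B) (Ω : D ⊗[F] B →ₗ[F] B ⊗[F] D)
    (hcoB : (TensorProduct.assoc F B B B).toLinearMap ∘ₗ rTensor B QB.delta ∘ₗ QB.delta
        = lTensor B QB.delta ∘ₗ QB.delta)
    (h1 : (TensorProduct.assoc F B B D).toLinearMap ∘ₗ rTensor D QB.delta ∘ₗ Ω
        = lTensor B Ω ∘ₗ (TensorProduct.assoc F B D B).toLinearMap ∘ₗ rTensor B Ω
            ∘ₗ (TensorProduct.assoc F D B B).symm.toLinearMap ∘ₗ lTensor D QB.delta)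
    (h3 : (TensorProduct.lid F D).toLinearMap ∘ₗ rTensor D QB.eps ∘ₗ Ω
        = (TensorProduct.rid F D).toLinearMap ∘ₗ lTensor D QB.eps)
    {g : B ⊗[F] B →ₗ[F] B} (hg : g ∘ₗ QB.delta = QB.eta ∘ₗ QB.eps) :
    rTensor (D ⊗[F] B) g
        ∘ₗ (TensorProduct.assoc F B B (D ⊗[F] B)).symm.toLinearMap
        ∘ₗ lTensor B (TensorProduct.assoc F B D B).toLinearMap
        ∘ₗ lTensor B (rTensor B Ω)
        ∘ₗ lTensor B (TensorProduct.assoc F D B B).symm.toLinearMap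
        ∘ₗ (TensorProduct.assoc F B D (B ⊗[F] B)).toLinearMap
        ∘ₗ TensorProduct.map Ω QB.delta
        ∘ₗ (TensorProduct.assoc F D B B).symm.toLinearMap
        ∘ₗ lTensor D QB.delta
      = rTensor (D ⊗[F] B) QB.eta ∘ₗ (TensorProduct.lid F (D ⊗[F] B)).symm.toLinearMap := by
  have hcoB' : (TensorProduct.assoc F B B B).symm.toLinearMap ∘ₗ lTensor B QB.delta ∘ₗ QB.delta
      = rTensor B QB.delta ∘ₗ QB.delta := by
    rw [← hcoB, LinearEquiv.symm_comp_assoc]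
  calc _ = rTensor (D ⊗[F] B) g ∘ₗ (TensorProduct.assoc F (B ⊗[F] B) D B).toLinearMap
          ∘ₗ rTensor B (passPairRight Ω) ∘ₗ (TensorProduct.assoc F D (B ⊗[F] B) B).symm.toLinearMap
          ∘ₗ lTensor D (rTensor B QB.delta ∘ₗ QB.delta) := by
        rw [passPairRight_comp, hcoB']
    _ = (TensorProduct.assoc F B D B).toLinearMap
          ∘ₗ rTensor B (rTensor D g ∘ₗ passPairRight Ω ∘ₗ lTensor D QB.delta)
          ∘ₗ (TensorProduct.assoc F D B B).symm.toLinearMap ∘ₗ lTensor D QB.delta := by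
        rw [rTensor_tensor, lTensor_comp,
          ← LinearMap.comp_assoc _ (lTensor D (rTensor B QB.delta)),
          ← rTensor_lTensor_comp_assoc_symm]
        simp only [rTensor_comp, LinearMap.comp_assoc, LinearEquiv.symm_comp_assoc]
    _ = (TensorProduct.assoc F B D B).toLinearMap ∘ₗ rTensor B (rTensor D (QB.eta ∘ₗ QB.eps) ∘ₗ Ω)
          ∘ₗ (TensorProduct.assoc F D B B).symm.toLinearMap ∘ₗ lTensor D QB.delta := by
        rw [← rTensor_comp_eq_passPairRight_comp h1, ← LinearMap.comp_assoc Ω, ← rTensor_comp,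
          hg]
    _ = _ := assoc_rTensor_eta_eps_comp_assoc_symm_lTensor_delta QB h3

end CodistributiveLaw

/-- for Hopf algebras `D`, `B` (Hopf coquasigroups with coassociative
coproducts) and a codistributive law `Ω` between the underlying comonoids, the four
a-monoidal identities hold automatically. -/
theorem stmt18_hopf_algebra_codistributive_law_is_a_monoidal
    {F : Type u} [Field F] {D B : Type u}
    [AddCommGroup D] [Module F D] [AddCommGroup B] [Module F B]
    (QD : HopfCoQG F D) (QB : HopfCoQG F B)
    (hcoD : (TensorProduct.assoc F D D D).toLinearMap ∘ₗ rTensor D QD.delta ∘ₗ QD.delta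
        = lTensor D QD.delta ∘ₗ QD.delta)
    (hcoB : (TensorProduct.assoc F B B B).toLinearMap ∘ₗ rTensor B QB.delta ∘ₗ QB.delta
        = lTensor B QB.delta ∘ₗ QB.delta)
    (Ω : D ⊗[F] B →ₗ[F] B ⊗[F] D)
    (h1 : (TensorProduct.assoc F B B D).toLinearMap ∘ₗ rTensor D QB.delta ∘ₗ Ω
        = lTensor B Ω ∘ₗ (TensorProduct.assoc F B D B).toLinearMap ∘ₗ rTensor B Ω
            ∘ₗ (TensorProduct.assoc F D B B).symm.toLinearMap ∘ₗ lTensor D QB.delta)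
    (h2 : (TensorProduct.assoc F B D D).symm.toLinearMap ∘ₗ lTensor B QD.delta ∘ₗ Ω
        = rTensor D Ω ∘ₗ (TensorProduct.assoc F D B D).symm.toLinearMap ∘ₗ lTensor D Ω
            ∘ₗ (TensorProduct.assoc F D D B).toLinearMap ∘ₗ rTensor B QD.delta)
    (h3 : (TensorProduct.lid F D).toLinearMap ∘ₗ rTensor D QB.eps ∘ₗ Ω
        = (TensorProduct.rid F D).toLinearMap ∘ₗ lTensor D QB.eps)
    (h4 : (TensorProduct.rid F B).toLinearMap ∘ₗ lTensor B QD.eps ∘ₗ Ω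
        = (TensorProduct.lid F B).toLinearMap ∘ₗ rTensor B QD.eps) :
    (lTensor D (lTensor B (QD.mu ∘ₗ lTensor D QD.lam))
        ∘ₗ lTensor D (TensorProduct.assoc F B D D).toLinearMap
        ∘ₗ lTensor D (rTensor D Ω)
        ∘ₗ lTensor D (TensorProduct.assoc F D B D).symm.toLinearMap
        ∘ₗ (TensorProduct.assoc F D D (B ⊗[F] D)).toLinearMap
        ∘ₗ TensorProduct.map QD.delta Ω
        ∘ₗ (TensorProduct.assoc F D D B).toLinearMap
        ∘ₗ rTensor B QD.delta
      = lTensor D (lTensor B QD.eta ∘ₗ (TensorProduct.rid F B).symm.toLinearMap))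
    ∧ (lTensor D (lTensor B (QD.mu ∘ₗ rTensor D QD.lam))
        ∘ₗ lTensor D (TensorProduct.assoc F B D D).toLinearMap
        ∘ₗ lTensor D (rTensor D Ω)
        ∘ₗ lTensor D (TensorProduct.assoc F D B D).symm.toLinearMap
        ∘ₗ (TensorProduct.assoc F D D (B ⊗[F] D)).toLinearMap
        ∘ₗ TensorProduct.map QD.delta Ω
        ∘ₗ (TensorProduct.assoc F D D B).toLinearMap
        ∘ₗ rTensor B QD.delta
      = lTensor D (lTensor B QD.eta ∘ₗ (TensorProduct.rid F B).symm.toLinearMap))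
    ∧ (rTensor (D ⊗[F] B) (QB.mu ∘ₗ lTensor B QB.lam)
        ∘ₗ (TensorProduct.assoc F B B (D ⊗[F] B)).symm.toLinearMap
        ∘ₗ lTensor B (TensorProduct.assoc F B D B).toLinearMap
        ∘ₗ lTensor B (rTensor B Ω)
        ∘ₗ lTensor B (TensorProduct.assoc F D B B).symm.toLinearMap
        ∘ₗ (TensorProduct.assoc F B D (B ⊗[F] B)).toLinearMap
        ∘ₗ TensorProduct.map Ω QB.delta
        ∘ₗ (TensorProduct.assoc F D B B).symm.toLinearMap
        ∘ₗ lTensor D QB.delta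
      = rTensor (D ⊗[F] B) QB.eta ∘ₗ (TensorProduct.lid F (D ⊗[F] B)).symm.toLinearMap)
    ∧ (rTensor (D ⊗[F] B) (QB.mu ∘ₗ rTensor B QB.lam)
        ∘ₗ (TensorProduct.assoc F B B (D ⊗[F] B)).symm.toLinearMap
        ∘ₗ lTensor B (TensorProduct.assoc F B D B).toLinearMap
        ∘ₗ lTensor B (rTensor B Ω)
        ∘ₗ lTensor B (TensorProduct.assoc F D B B).symm.toLinearMap
        ∘ₗ (TensorProduct.assoc F B D (B ⊗[F] B)).toLinearMap
        ∘ₗ TensorProduct.map Ω QB.delta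
        ∘ₗ (TensorProduct.assoc F D B B).symm.toLinearMap
        ∘ₗ lTensor D QB.delta
      = rTensor (D ⊗[F] B) QB.eta ∘ₗ (TensorProduct.lid F (D ⊗[F] B)).symm.toLinearMap) :=
  ⟨aMonoidal_left_of_comp_delta_eq QD Ω hcoD h2 h4 QD.mu_comp_lTensor_lam_comp_delta,
    aMonoidal_left_of_comp_delta_eq QD Ω hcoD h2 h4 QD.mu_comp_rTensor_lam_comp_delta,
    aMonoidal_right_of_comp_delta_eq QB Ω hcoB h1 h3 QB.mu_comp_lTensor_lam_comp_delta,
    aMonoidal_right_of_comp_delta_eq QB Ω hcoB h1 h3 QB.mu_comp_rTensor_lam_comp_delta⟩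
end
end
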